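/- arXiv:2509.07975 — 8 statements merged into one kernel-verified Lean document; each statement's English description precedes it below -/
import Mathlib

section
/- Let A = {1,...,k+1}, let (B_i)_{i∈A} be a family of finite sets, let B be their disjoint union, and let J ⊆ B with |J| ≤ k. Then ∑_{I ⊆ A, B_I ⊇ J} (-1)^{|I|} * C(|B_I| - |J|, k - |J|) = 0, where B_I denotes the disjoint union of the B_i for i ∈ I. -/
open Finset

theorem stmt_2 (k : ℕ) {γ : Type*} [DecidableEq γ] (B : Fin (k + 1) → Finset γ)
    (hdisj : ∀ i j, i ≠ j → Disjoint (B i) (B j))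
    (J : Finset γ) (hJB : J ⊆ Finset.univ.biUnion B) (hJ : J.card ≤ k) :
    ∑ I ∈ (Finset.univ : Finset (Finset (Fin (k + 1)))).filter (fun I => J ⊆ I.biUnion B),
      (-1 : ℤ) ^ I.card * (((I.biUnion B).card - J.card).choose (k - J.card) : ℤ) = 0 := by
  classical
  set Bu : Finset γ := Finset.univ.biUnion B with hBu
  set m : ℕ := k - J.card with hm
  set P : Finset (Finset γ) := (Bu \ J).powersetCard m with hP
  set S : Finset γ → Finset (Fin (k + 1)) :=
    fun T => univ.filter (fun i => (T ∩ B i).Nonempty) with hS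
  -- key : |S T| ≤ |T|
  have key : ∀ T : Finset γ, (S T).card ≤ T.card := by
    intro T
    have hsub : S T ⊆ T.image (fun x => if h : ∃ i, x ∈ B i then h.choose else 0) := by
      intro i hi
      simp only [hS, mem_filter] at hi
      obtain ⟨x, hx⟩ := hi.2
      simp only [mem_inter] at hx
      refine mem_image.2 ⟨x, hx.1, ?_⟩
      have hex : ∃ j, x ∈ B j := ⟨i, hx.2⟩
      rw [dif_pos hex]
      by_contra hne
      exact absurd hx.2 (Finset.disjoint_left.1 (hdisj _ _ hne) hex.choose_spec)
    calc (S T).card ≤ _ := card_le_card hsub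
      _ ≤ T.card := card_image_le
  -- subset characterization
  have subset_iff : ∀ (T : Finset γ) (I : Finset (Fin (k + 1))), T ⊆ Bu →
      (T ⊆ I.biUnion B ↔ S T ⊆ I) := by
    intro T I hT
    constructor
    · intro h i hi
      simp only [hS, mem_filter] at hi
      obtain ⟨x, hx⟩ := hi.2
      simp only [mem_inter] at hx
      obtain ⟨j, hj, hxj⟩ := mem_biUnion.1 (h hx.1)
      by_cases hij : i = j
      · exact hij ▸ hj
      · exact absurd hxj (Finset.disjoint_left.1 (hdisj i j hij) hx.2)
    · intro h x hx
      obtain ⟨i, -, hxi⟩ := mem_biUnion.1 (hT hx)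
      refine mem_biUnion.2 ⟨i, h ?_, hxi⟩
      simp only [hS, mem_filter, mem_univ, true_and]
      exact ⟨x, mem_inter.2 ⟨hx, hxi⟩⟩
  -- alternating sum over supersets of a proper subset vanishes
  have alt : ∀ S₀ : Finset (Fin (k + 1)), S₀ ≠ univ →
      ∑ I ∈ univ.filter (fun I => S₀ ⊆ I), (-1 : ℤ) ^ I.card = 0 := by
    intro S₀ hne
    have hbij : ∑ I ∈ univ.filter (fun I => S₀ ⊆ I), (-1 : ℤ) ^ I.card
        = ∑ T ∈ (univ \ S₀).powerset, (-1 : ℤ) ^ (T ∪ S₀).card := by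
      refine Finset.sum_nbij' (fun I => I \ S₀) (fun T => T ∪ S₀) ?_ ?_ ?_ ?_ ?_
      · intro I _
        exact mem_powerset.2 (sdiff_subset_sdiff (subset_univ I) le_rfl)
      · intro T _
        exact mem_filter.2 ⟨mem_univ _, subset_union_right⟩
      · intro I hI
        exact sdiff_union_of_subset (mem_filter.1 hI).2
      · intro T hT
        have hd : Disjoint T S₀ := disjoint_of_subset_left (mem_powerset.1 hT) sdiff_disjoint
        exact union_sdiff_cancel_right hd
      · intro I hI
        rw [sdiff_union_of_subset (mem_filter.1 hI).2]
    rw [hbij]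
    have hcard : ∀ T ∈ (univ \ S₀).powerset, (-1 : ℤ) ^ (T ∪ S₀).card
        = (-1 : ℤ) ^ S₀.card * (-1 : ℤ) ^ T.card := by
      intro T hT
      have hd : Disjoint T S₀ := disjoint_of_subset_left (mem_powerset.1 hT) sdiff_disjoint
      rw [card_union_of_disjoint hd, pow_add, mul_comm]
    rw [Finset.sum_congr rfl hcard, ← Finset.mul_sum,
      Finset.sum_powerset_neg_one_pow_card_of_nonempty, mul_zero]
    rw [sdiff_nonempty]
    exact fun h => hne (univ_subset_iff.1 h)
  -- rewrite each choose term as a cardinality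
  have step1 : ∀ I ∈ (Finset.univ : Finset (Finset (Fin (k + 1)))).filter
      (fun I => J ⊆ I.biUnion B),
      (-1 : ℤ) ^ I.card * (((I.biUnion B).card - J.card).choose m : ℤ)
      = ∑ R ∈ P, (if R ⊆ I.biUnion B then (-1 : ℤ) ^ I.card else 0) := by
    intro I hI
    have hJI : J ⊆ I.biUnion B := (mem_filter.1 hI).2
    have hIBu : I.biUnion B ⊆ Bu := biUnion_subset_biUnion_of_subset_left B (subset_univ I)
    have hfilt : P.filter (fun R => R ⊆ I.biUnion B) = (I.biUnion B \ J).powersetCard m := by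
      ext R
      simp only [hP, mem_filter, mem_powersetCard, subset_sdiff]
      constructor
      · rintro ⟨⟨⟨hRBu, hRJ⟩, hRc⟩, hRI⟩
        exact ⟨⟨hRI, hRJ⟩, hRc⟩
      · rintro ⟨⟨hRI, hRJ⟩, hRc⟩
        exact ⟨⟨⟨hRI.trans hIBu, hRJ⟩, hRc⟩, hRI⟩
    have hc : ((I.biUnion B).card - J.card).choose m
        = (P.filter (fun R => R ⊆ I.biUnion B)).card := by
      rw [hfilt, card_powersetCard, card_sdiff_of_subset hJI]
    rw [hc, ← Finset.sum_filter, Finset.sum_const, nsmul_eq_mul, mul_comm]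
  rw [Finset.sum_congr rfl step1, Finset.sum_comm]
  refine Finset.sum_eq_zero fun R hR => ?_
  -- inner sum over I
  have hRP : R ⊆ Bu \ J ∧ R.card = m := mem_powersetCard.1 hR
  have hRBu : R ⊆ Bu := hRP.1.trans sdiff_subset
  have hRJ : Disjoint R J := (subset_sdiff.1 hRP.1).2
  have hJRBu : J ∪ R ⊆ Bu := union_subset hJB hRBu
  have hSne : S (J ∪ R) ≠ univ := by
    intro h
    have h1 : (S (J ∪ R)).card ≤ (J ∪ R).card := key _
    have h2 : (J ∪ R).card = J.card + m := by
      rw [card_union_of_disjoint hRJ.symm, hRP.2]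
    have h3 : J.card + m ≤ k := by omega
    rw [h, card_univ, Fintype.card_fin] at h1
    omega
  have heq : ∑ I ∈ (Finset.univ : Finset (Finset (Fin (k + 1)))).filter
      (fun I => J ⊆ I.biUnion B), (if R ⊆ I.biUnion B then (-1 : ℤ) ^ I.card else 0)
      = ∑ I ∈ univ.filter (fun I => S (J ∪ R) ⊆ I), (-1 : ℤ) ^ I.card := by
    rw [← Finset.sum_filter, Finset.filter_filter]
    apply Finset.sum_congr _ (fun _ _ => rfl)
    apply Finset.filter_congr
    intro I _
    rw [← subset_iff _ _ hJRBu, union_subset_iff]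
  rw [heq]
  exact alt _ hSne
end

section
/- Let A = {1,...,k+1}, let (B_i)_{i∈A} be a family of finite sets with disjoint union B, and let J ⊆ B with |J| ≤ k. Then ∑_{I ⊆ A, B_I ⊇ J} (-1)^{|I|} * C'(|B_I| - |J| - 1, k - |J|) = 0, where C'(a,b) is the binomial coefficient extended by the convention C'(-1, b) = (-1)^b for all b ≥ 0 (and C'(a,b) = 0 for b > a ≥ 0). -/
open Finset

/-- The binomial coefficient `C'(a, b)` extended by the convention `C'(-1, b) = (-1)^b`
(and `C'(a, b)` the usual binomial coefficient for `a ≥ 0`, in particular `0` for `b > a ≥ 0`). -/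
def extChoose (a : ℤ) (b : ℕ) : ℤ :=
  if a = -1 then (-1) ^ b else if 0 ≤ a then (a.toNat.choose b : ℤ) else 0

lemma extChoose_zero {a : ℤ} (ha : -1 ≤ a) : extChoose a 0 = 1 := by
  unfold extChoose
  split_ifs with h1 h2
  · norm_num
  · simp
  · omega

lemma extChoose_pascal {a : ℤ} (ha : -1 ≤ a) (d : ℕ) :
    extChoose (a + 1) (d + 1) = extChoose a (d + 1) + extChoose a d := by
  rcases eq_or_lt_of_le ha with h | h
  · have ha' : a = -1 := h.symm
    subst ha'
    simp [extChoose, pow_succ]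
  · have h0 : 0 ≤ a := by omega
    have h1 : (0:ℤ) ≤ a + 1 := by omega
    have hne : a ≠ -1 := by omega
    have hne1 : a + 1 ≠ -1 := by omega
    have htn : (a + 1).toNat = a.toNat + 1 := by omega
    simp only [extChoose, if_neg hne, if_neg hne1, if_pos h0, if_pos h1, htn,
      Nat.choose_succ_succ]
    push_cast
    ring

lemma extChoose_telescope {c : ℤ} (hc : -1 ≤ c) (d m : ℕ) :
    extChoose (c + m) (d + 1)
      = extChoose c (d + 1) + ∑ t ∈ Finset.range m, extChoose (c + t) d := by
  induction m with
  | zero => simp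
  | succ n ih =>
    have hn : (0:ℤ) ≤ (n:ℤ) := Int.natCast_nonneg n
    have hcn : -1 ≤ c + n := by omega
    have h1 : (c + (n + 1 : ℕ) : ℤ) = (c + n) + 1 := by push_cast; ring
    rw [h1, extChoose_pascal hcn d, Finset.sum_range_succ, ih]
    push_cast
    ring

lemma key_lemma {ι : Type*} [DecidableEq ι] (d : ℕ) (U : Finset ι) (m : ι → ℕ) (c : ℤ)
    (hc : -1 ≤ c) (hd : d < U.card) :
    ∑ T ∈ U.powerset, (-1:ℤ) ^ T.card * extChoose (c + ∑ i ∈ T, (m i : ℤ)) d = 0 := by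
  induction d generalizing U c with
  | zero =>
    have hU : U.Nonempty := Finset.card_pos.mp hd
    have hco : ∀ T ∈ U.powerset, (-1:ℤ) ^ T.card * extChoose (c + ∑ i ∈ T, (m i : ℤ)) 0
        = (-1:ℤ) ^ T.card := by
      intro T _
      have h0 : (0:ℤ) ≤ ∑ i ∈ T, (m i : ℤ) :=
        Finset.sum_nonneg fun i _ => Int.natCast_nonneg _
      rw [extChoose_zero (by omega), mul_one]
    rw [Finset.sum_congr rfl hco]
    exact Finset.sum_powerset_neg_one_pow_card_of_nonempty hU
  | succ d ih =>
    obtain ⟨i, hi⟩ := Finset.card_pos.mp (show 0 < U.card by omega)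
    set U' := U.erase i with hU'
    have hiU' : i ∉ U' := Finset.notMem_erase i U
    have hins : U = insert i U' := (Finset.insert_erase hi).symm
    have hcard : U'.card + 1 = U.card := by
      rw [hU']; exact Finset.card_erase_add_one hi
    have hstep : ∀ T ∈ U'.powerset,
        (-1:ℤ) ^ (insert i T).card *
            extChoose (c + ∑ j ∈ insert i T, (m j : ℤ)) (d + 1)
          = -((-1:ℤ) ^ T.card * extChoose (c + ∑ j ∈ T, (m j : ℤ)) (d + 1))
            - ∑ t ∈ Finset.range (m i),
                (-1:ℤ) ^ T.card * extChoose ((c + t) + ∑ j ∈ T, (m j : ℤ)) d := by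
      intro T hT
      have hiT : i ∉ T := fun h => hiU' (Finset.mem_powerset.mp hT h)
      have hcT : (insert i T).card = T.card + 1 := Finset.card_insert_of_notMem hiT
      have hsT : ∑ j ∈ insert i T, (m j : ℤ) = (∑ j ∈ T, (m j : ℤ)) + (m i : ℤ) := by
        rw [Finset.sum_insert hiT]; ring
      have h0 : (0:ℤ) ≤ ∑ j ∈ T, (m j : ℤ) :=
        Finset.sum_nonneg fun j _ => Int.natCast_nonneg _
      have hcs : -1 ≤ c + ∑ j ∈ T, (m j : ℤ) := by omega
      have hX : ∑ t ∈ Finset.range (m i),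
            (-1:ℤ) ^ T.card * extChoose ((c + t) + ∑ j ∈ T, (m j : ℤ)) d
          = (-1:ℤ) ^ T.card * ∑ t ∈ Finset.range (m i),
              extChoose ((c + ∑ j ∈ T, (m j : ℤ)) + t) d := by
        rw [Finset.mul_sum]
        refine Finset.sum_congr rfl fun t _ => ?_
        congr 2
        ring
      rw [hcT, hsT, ← add_assoc, extChoose_telescope hcs d (m i), hX, pow_succ]
      ring
    rw [hins, Finset.sum_powerset_insert hiU', Finset.sum_congr rfl hstep,
      Finset.sum_sub_distrib]
    have hG : ∑ T ∈ U'.powerset, ∑ t ∈ Finset.range (m i),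
        (-1:ℤ) ^ T.card * extChoose ((c + t) + ∑ j ∈ T, (m j : ℤ)) d = 0 := by
      rw [Finset.sum_comm]
      refine Finset.sum_eq_zero fun t _ => ?_
      have ht : (0:ℤ) ≤ (t:ℤ) := Int.natCast_nonneg t
      exact ih U' (c + t) (by omega) (by omega)
    rw [hG]
    simp

theorem stmt_3 (k : ℕ) {γ : Type*} [DecidableEq γ] (B : Fin (k + 1) → Finset γ)
    (hdisj : ∀ i j, i ≠ j → Disjoint (B i) (B j))
    (J : Finset γ) (hJB : J ⊆ Finset.univ.biUnion B) (hJ : J.card ≤ k) :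
    ∑ I ∈ (Finset.univ : Finset (Finset (Fin (k + 1)))).filter (fun I => J ⊆ I.biUnion B),
      (-1 : ℤ) ^ I.card *
        extChoose (((I.biUnion B).card : ℤ) - (J.card : ℤ) - 1) (k - J.card) = 0 := by
  classical
  set S : Finset (Fin (k + 1)) :=
    Finset.univ.filter (fun i => (J ∩ B i).Nonempty) with hSdef
  -- J is contained in the biUnion over S
  have hJS : J ⊆ S.biUnion B := by
    intro x hx
    obtain ⟨i, _, hxB⟩ := Finset.mem_biUnion.mp (hJB hx)
    exact Finset.mem_biUnion.mpr ⟨i, by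
      simp only [hSdef, Finset.mem_filter, Finset.mem_univ, true_and]
      exact ⟨x, Finset.mem_inter.mpr ⟨hx, hxB⟩⟩, hxB⟩
  -- the filter condition is equivalent to S ⊆ I
  have hiff : ∀ I : Finset (Fin (k + 1)), (J ⊆ I.biUnion B) ↔ S ⊆ I := by
    intro I
    constructor
    · intro h i hiS
      simp only [hSdef, Finset.mem_filter, Finset.mem_univ, true_and] at hiS
      obtain ⟨x, hx⟩ := hiS
      have hxJ : x ∈ J := (Finset.mem_inter.mp hx).1
      have hxB : x ∈ B i := (Finset.mem_inter.mp hx).2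
      obtain ⟨j, hjI, hxBj⟩ := Finset.mem_biUnion.mp (h hxJ)
      by_cases hij : i = j
      · exact hij ▸ hjI
      · exact absurd hxBj (Finset.disjoint_left.mp (hdisj i j hij) hxB)
    · intro h x hx
      obtain ⟨i, hiS, hxB⟩ := Finset.mem_biUnion.mp (hJS hx)
      exact Finset.mem_biUnion.mpr ⟨i, h hiS, hxB⟩
  -- card S ≤ card J
  have hpair : ∀ i ∈ S, ∀ j ∈ S, i ≠ j → Disjoint (J ∩ B i) (J ∩ B j) := by
    intro i _ j _ hij
    exact (hdisj i j hij).mono Finset.inter_subset_right Finset.inter_subset_right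
  have hScard : S.card ≤ J.card := by
    have h1 : (S.biUnion fun i => J ∩ B i).card = ∑ i ∈ S, (J ∩ B i).card :=
      Finset.card_biUnion hpair
    have h2 : (S.biUnion fun i => J ∩ B i) ⊆ J :=
      Finset.biUnion_subset.mpr fun i _ => Finset.inter_subset_left
    have h3 : ∀ i ∈ S, 1 ≤ (J ∩ B i).card := by
      intro i hiS
      simp only [hSdef, Finset.mem_filter, Finset.mem_univ, true_and] at hiS
      exact Finset.card_pos.mpr hiS
    calc S.card = ∑ _i ∈ S, 1 := by simp
      _ ≤ ∑ i ∈ S, (J ∩ B i).card := Finset.sum_le_sum h3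
      _ = (S.biUnion fun i => J ∩ B i).card := h1.symm
      _ ≤ J.card := Finset.card_le_card h2
  -- disjointness: card of biUnion over any set is sum of cards
  have hcardbi : ∀ I : Finset (Fin (k + 1)), (I.biUnion B).card = ∑ i ∈ I, (B i).card := by
    intro I
    exact Finset.card_biUnion fun i _ j _ hij => hdisj i j hij
  -- base constant
  set c : ℤ := (∑ i ∈ S, ((B i).card : ℤ)) - J.card - 1 with hcdef
  have hJle : (J.card : ℤ) ≤ ∑ i ∈ S, ((B i).card : ℤ) := by
    have := Finset.card_le_card hJS
    rw [hcardbi S] at this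
    push_cast
    exact_mod_cast this
  have hc : -1 ≤ c := by omega
  have hSc : Sᶜ.card = k + 1 - S.card := by
    rw [Finset.card_compl]
    simp
  have hd : k - J.card < Sᶜ.card := by
    rw [hSc]
    omega
  -- rewrite the filter
  have hfilter : (Finset.univ : Finset (Finset (Fin (k + 1)))).filter
      (fun I => J ⊆ I.biUnion B)
      = (Finset.univ : Finset (Finset (Fin (k + 1)))).filter (fun I => S ⊆ I) := by
    apply Finset.filter_congr
    intro I _
    simp [hiff I]
  rw [hfilter]
  -- reindex by T = I \ S over powerset of Sᶜ
  have hbij : ∑ I ∈ (Finset.univ : Finset (Finset (Fin (k + 1)))).filter (fun I => S ⊆ I),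
      (-1 : ℤ) ^ I.card *
        extChoose (((I.biUnion B).card : ℤ) - (J.card : ℤ) - 1) (k - J.card)
      = ∑ T ∈ Sᶜ.powerset, (-1 : ℤ) ^ (S ∪ T).card *
        extChoose ((((S ∪ T).biUnion B).card : ℤ) - (J.card : ℤ) - 1) (k - J.card) := by
    refine Finset.sum_nbij' (fun I => I \ S) (fun T => S ∪ T) ?_ ?_ ?_ ?_ ?_
    · intro I hI
      simp only [Finset.mem_filter] at hI
      simp only [Finset.mem_powerset]
      intro x hx
      simp only [Finset.mem_sdiff] at hx
      simp [hx.2]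
    · intro T hT
      simp only [Finset.mem_filter, Finset.mem_univ, true_and]
      exact Finset.subset_union_left
    · intro I hI
      simp only [Finset.mem_filter] at hI
      exact Finset.union_sdiff_of_subset hI.2
    · intro T hT
      simp only [Finset.mem_powerset] at hT
      have : Disjoint S T := Finset.disjoint_left.mpr fun x hxS hxT => by
        have := hT hxT
        simp only [Finset.mem_compl] at this
        exact this hxS
      show (S ∪ T) \ S = T
      rw [Finset.union_sdiff_cancel_left this]
    · intro I hI
      simp only [Finset.mem_filter] at hI
      rw [Finset.union_sdiff_of_subset hI.2]
  rw [hbij]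
  -- now compute each term
  have hterm : ∀ T ∈ Sᶜ.powerset, (-1 : ℤ) ^ (S ∪ T).card *
      extChoose ((((S ∪ T).biUnion B).card : ℤ) - (J.card : ℤ) - 1) (k - J.card)
      = (-1:ℤ) ^ S.card *
        ((-1:ℤ) ^ T.card * extChoose (c + ∑ i ∈ T, ((B i).card : ℤ)) (k - J.card)) := by
    intro T hT
    simp only [Finset.mem_powerset] at hT
    have hdisjST : Disjoint S T := Finset.disjoint_left.mpr fun x hxS hxT => by
      have := hT hxT
      simp only [Finset.mem_compl] at this
      exact this hxS
    have hcu : (S ∪ T).card = S.card + T.card := Finset.card_union_of_disjoint hdisjST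
    have hbu : (((S ∪ T).biUnion B).card : ℤ)
        = (∑ i ∈ S, ((B i).card : ℤ)) + ∑ i ∈ T, ((B i).card : ℤ) := by
      rw [hcardbi (S ∪ T)]
      push_cast
      rw [Finset.sum_union hdisjST]
    rw [hcu, hbu, pow_add, hcdef]
    ring_nf
  rw [Finset.sum_congr rfl hterm, ← Finset.mul_sum,
    key_lemma (k - J.card) Sᶜ (fun i => (B i).card) c hc hd, mul_zero]
end

section
/- Let R be a commutative ring and A a commutative R-algebra. A linear map Δ: A → A is a differential operator of order ≤ k (in the Koszul/Grothendieck sense) if and only if for all a_1, ..., a_{k+1} ∈ A: Δ(a_1 ⋯ a_{k+1}) = ∑_{∅ ≠ I ⊊ {1,...,k+1}} (-1)^{k+1-|I|+1} (∏_{i ∉ I} a_i) · Δ(∏_{i ∈ I} a_i) + (-1)^{k+1+1} (a_1 ⋯ a_{k+1}) · Δ(1); equivalently, ∑_{I ⊆ {1,...,k+1}} (-1)^{|I|} (∏_{i ∉ I} a_i) · Δ(∏_{i ∈ I} a_i) = 0, where the product over the empty set is 1. -/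
open Finset

/-- Differential operators of order at most `k` on a commutative `R`-algebra `A`, in the
inductive Koszul/Grothendieck sense. -/
def IsDiffOp {R A : Type*} [CommRing R] [CommRing A] [Algebra R A] :
    ℕ → (A →ₗ[R] A) → Prop
  | 0, D => ∀ x y : A, D (x * y) = D x * y
  | k + 1, D => ∀ a : A,
      IsDiffOp k (D ∘ₗ LinearMap.mulLeft R a - LinearMap.mulLeft R a ∘ₗ D)

section Aux

variable {R A : Type*} [CommRing R] [CommRing A] [Algebra R A]

private lemma castLE_eq_castSucc {n : ℕ} (h : n ≤ n + 1) (i : Fin n) :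
    Fin.castLE h i = Fin.castSucc i := rfl

private lemma castSucc_ne_last' {n : ℕ} (i : Fin n) :
    Fin.castSucc i ≠ Fin.last n := (Fin.castSucc_lt_last i).ne

private lemma castSuccEmb_app {n : ℕ} (i : Fin n) :
    Fin.castSuccEmb i = Fin.castSucc i := rfl

private lemma last_not_mem_map {n : ℕ} (I : Finset (Fin n)) :
    Fin.last n ∉ I.map Fin.castSuccEmb := by
  rw [Finset.mem_map]
  rintro ⟨i, -, hi⟩
  exact (Fin.castSucc_lt_last i).ne hi

private lemma mem_map_iff {n : ℕ} (I : Finset (Fin n)) (i : Fin n) :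
    Fin.castSucc i ∈ I.map Fin.castSuccEmb ↔ i ∈ I := by
  constructor
  · rintro h
    rw [Finset.mem_map] at h
    obtain ⟨a, ha, hai⟩ := h
    rwa [show a = i from Fin.castSucc_injective n hai] at ha
  · intro h
    exact Finset.mem_map_of_mem _ h

private lemma sum_finset_fin_succ {M : Type*} [AddCommMonoid M] (n : ℕ)
    (f : Finset (Fin (n + 1)) → M) :
    ∑ J : Finset (Fin (n + 1)), f J =
      ∑ I : Finset (Fin n), f (I.map Fin.castSuccEmb) +
      ∑ I : Finset (Fin n), f (insert (Fin.last n) (I.map Fin.castSuccEmb)) := by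
  rw [← Finset.sum_filter_add_sum_filter_not univ (fun J => Fin.last n ∉ J)]
  congr 1
  · refine (Finset.sum_nbij' (i := fun I => I.map Fin.castSuccEmb)
      (j := fun J => J.preimage Fin.castSucc (Fin.castSucc_injective n).injOn)
      ?_ ?_ ?_ ?_ ?_).symm
    · intro I _
      simp only [mem_filter, mem_univ, true_and]
      exact last_not_mem_map I
    · intro J _; exact mem_univ _
    · intro I _
      ext i
      simp [mem_map_iff, castLE_eq_castSucc, castSuccEmb_app, castSucc_ne_last']
    · intro J hJ
      simp only [mem_filter, mem_univ, true_and] at hJ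
      ext j
      refine Fin.lastCases ?_ (fun i => ?_) j
      · simp [last_not_mem_map, hJ, castLE_eq_castSucc, castSuccEmb_app, castSucc_ne_last']
      · simp [mem_map_iff, castLE_eq_castSucc, castSuccEmb_app, castSucc_ne_last']
    · intro I _; rfl
  · refine (Finset.sum_nbij' (i := fun I => insert (Fin.last n) (I.map Fin.castSuccEmb))
      (j := fun J => (J.erase (Fin.last n)).preimage Fin.castSucc
        (Fin.castSucc_injective n).injOn)
      ?_ ?_ ?_ ?_ ?_).symm
    · intro I _
      simp only [mem_filter, mem_univ, true_and, not_not]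
      exact Finset.mem_insert_self _ _
    · intro J _; exact mem_univ _
    · intro I _
      ext i
      simp [mem_map_iff, Finset.mem_erase, castLE_eq_castSucc, castSuccEmb_app, castSucc_ne_last']
    · intro J hJ
      simp only [mem_filter, mem_univ, true_and, not_not] at hJ
      ext j
      refine Fin.lastCases ?_ (fun i => ?_) j
      · simp [hJ, castLE_eq_castSucc, castSuccEmb_app, castSucc_ne_last']
      · simp only [Finset.mem_insert, (Fin.castSucc_lt_last i).ne, false_or]
        rw [mem_map_iff, Finset.mem_preimage, Finset.mem_erase]
        simp [(Fin.castSucc_lt_last i).ne]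
    · intro I _; rfl

private lemma compl_map {n : ℕ} (I : Finset (Fin n)) :
    (I.map Fin.castSuccEmb)ᶜ = insert (Fin.last n) (Iᶜ.map Fin.castSuccEmb) := by
  ext j
  refine Fin.lastCases ?_ (fun i => ?_) j
  · simp [last_not_mem_map, castLE_eq_castSucc, castSuccEmb_app, castSucc_ne_last']
  · simp [mem_map_iff, castLE_eq_castSucc, castSuccEmb_app, castSucc_ne_last']

private lemma compl_insert_map {n : ℕ} (I : Finset (Fin n)) :
    (insert (Fin.last n) (I.map Fin.castSuccEmb))ᶜ = Iᶜ.map Fin.castSuccEmb := by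
  ext j
  refine Fin.lastCases ?_ (fun i => ?_) j
  · simp [last_not_mem_map, castLE_eq_castSucc, castSuccEmb_app, castSucc_ne_last']
  · simp [mem_map_iff, castLE_eq_castSucc, castSuccEmb_app, castSucc_ne_last']

private lemma prod_snoc_map {n : ℕ} (a : Fin n → A) (b : A) (I : Finset (Fin n)) :
    ∏ i ∈ I.map Fin.castSuccEmb, Fin.snoc a b i = ∏ i ∈ I, a i := by
  rw [Finset.prod_map]
  simp only [castSuccEmb_app, Fin.snoc_castSucc]

private def Smap {R A : Type*} [CommRing R] [CommRing A] [Algebra R A]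
    (n : ℕ) (D : A →ₗ[R] A) (a : Fin n → A) : A :=
  ∑ I : Finset (Fin n), (-1 : ℤ) ^ I.card • ((∏ i ∈ Iᶜ, a i) * D (∏ i ∈ I, a i))

private lemma Smap_snoc (n : ℕ) (D : A →ₗ[R] A) (a : Fin n → A) (b : A) :
    Smap (n + 1) D (Fin.snoc a b) =
      - Smap n (D ∘ₗ LinearMap.mulLeft R b - LinearMap.mulLeft R b ∘ₗ D) a := by
  unfold Smap
  rw [sum_finset_fin_succ, ← Finset.sum_neg_distrib, ← Finset.sum_add_distrib]
  refine Finset.sum_congr rfl fun I _ => ?_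
  rw [compl_map, compl_insert_map, prod_snoc_map,
    Finset.prod_insert (last_not_mem_map Iᶜ),
    Finset.prod_insert (last_not_mem_map I),
    prod_snoc_map, prod_snoc_map]
  simp only [Fin.snoc_last, Finset.card_map,
    Finset.card_insert_of_notMem (last_not_mem_map I),
    LinearMap.sub_apply, LinearMap.comp_apply, LinearMap.mulLeft_apply, map_sub]
  rw [zsmul_eq_mul, zsmul_eq_mul, zsmul_eq_mul]
  push_cast
  ring

end Aux

theorem stmt_5 {R A : Type*} [CommRing R] [CommRing A] [Algebra R A]
    (k : ℕ) (D : A →ₗ[R] A) :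
    IsDiffOp k D ↔
      ∀ a : Fin (k + 1) → A,
        ∑ I ∈ (Finset.univ : Finset (Finset (Fin (k + 1)))),
          (-1 : ℤ) ^ I.card • ((∏ i ∈ Iᶜ, a i) * D (∏ i ∈ I, a i)) = 0 := by
  have key : ∀ (k : ℕ) (D : A →ₗ[R] A),
      IsDiffOp k D ↔ ∀ a : Fin (k + 1) → A, Smap (k + 1) D a = 0 := by
    intro k
    induction k with
    | zero =>
      intro D
      constructor
      · intro h a
        have h1 : D (a 0) = D 1 * a 0 := by
          have := h 1 (a 0); rwa [one_mul] at this
        rw [show a = Fin.snoc (fun _ : Fin 0 => (1 : A)) (a 0) by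
          funext i; fin_cases i; rfl, Smap_snoc]
        unfold Smap
        simp [h1, mul_comm]
      · intro h x y
        have hx : ∀ z : A, D z = z * D 1 := by
          intro z
          have hz := h (fun _ => z)
          rw [show (fun _ : Fin 1 => z) = Fin.snoc (fun _ : Fin 0 => (1 : A)) z by
            funext i; fin_cases i; rfl, Smap_snoc] at hz
          unfold Smap at hz
          simp only [neg_eq_zero] at hz
          have huniv : (Finset.univ : Finset (Finset (Fin 0))) = {∅} := by
            apply Finset.eq_singleton_iff_unique_mem.mpr
            exact ⟨Finset.mem_univ _, fun s _ =>
              Finset.eq_empty_of_forall_notMem fun x => x.elim0⟩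
          rw [huniv, Finset.sum_singleton] at hz
          simp only [Finset.card_empty, pow_zero, one_smul, Finset.prod_empty, one_mul,
            LinearMap.sub_apply, LinearMap.comp_apply, LinearMap.mulLeft_apply, mul_one,
            Finset.prod_const_one, sub_eq_zero] at hz
          exact hz
        rw [hx (x * y), hx x]
        ring
    | succ k ih =>
      intro D
      show (∀ b : A, IsDiffOp k _) ↔ _
      constructor
      · intro h a
        rw [← Fin.snoc_init_self a, Smap_snoc, neg_eq_zero]
        exact (ih _).mp (h _) _
      · intro h b
        rw [ih]
        intro a
        have hs := h (Fin.snoc a b)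
        rw [Smap_snoc, neg_eq_zero] at hs
        exact hs
  exact key k D
end

section
/- Let R be a commutative ring and x a set (or R-module basis). Let Sx = R[x] be the polynomial algebra (free commutative R-algebra) on x. Then for every k ≥ 0, restriction gives an R-module isomorphism from the module of differential operators on R[x] of order ≤ k to the module of R-linear maps from the span of monomials of degree ≤ k to R[x]. In particular, every R-linear map φ from the degree-≤-k part of R[x] to R[x] extends uniquely to a differential operator of order ≤ k on R[x]. -/
namespace IsDiffOp

variable {R A : Type*} [CommRing R] [CommRing A] [Algebra R A]

theorem zero : ∀ k : ℕ, IsDiffOp k (0 : A →ₗ[R] A)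
  | 0 => fun _ _ => by simp
  | k + 1 => fun _ => by simpa using zero k

theorem add : ∀ {k : ℕ} {D E : A →ₗ[R] A}, IsDiffOp k D → IsDiffOp k E → IsDiffOp k (D + E)
  | 0, _, _, hD, hE => fun p q => by simp [hD p q, hE p q, add_mul]
  | _ + 1, _, _, hD, hE => fun a => by
    convert add (hD a) (hE a) using 1
    ext
    simp only [LinearMap.add_apply, LinearMap.sub_apply, LinearMap.comp_apply,
      LinearMap.mulLeft_apply, map_add]
    ring

theorem neg : ∀ {k : ℕ} {D : A →ₗ[R] A}, IsDiffOp k D → IsDiffOp k (-D)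
  | 0, _, hD => fun p q => by simp [hD p q]
  | _ + 1, _, hD => fun a => by
    convert neg (hD a) using 1
    ext
    simp only [LinearMap.neg_apply, LinearMap.sub_apply, LinearMap.comp_apply,
      LinearMap.mulLeft_apply]
    ring

theorem sub {k : ℕ} {D E : A →ₗ[R] A} (hD : IsDiffOp k D) (hE : IsDiffOp k E) :
    IsDiffOp k (D - E) :=
  sub_eq_add_neg D E ▸ hD.add hE.neg

theorem mulLeft_comp (b : A) :
    ∀ {k : ℕ} {D : A →ₗ[R] A}, IsDiffOp k D → IsDiffOp k (LinearMap.mulLeft R b ∘ₗ D)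
  | 0, _, hD => fun p q => by simp [hD p q, mul_assoc]
  | _ + 1, _, hD => fun a => by
    convert mulLeft_comp b (hD a) using 1
    ext
    simp only [LinearMap.sub_apply, LinearMap.comp_apply, LinearMap.mulLeft_apply]
    ring

theorem comp_mulLeft (b : A) :
    ∀ {k : ℕ} {D : A →ₗ[R] A}, IsDiffOp k D → IsDiffOp k (D ∘ₗ LinearMap.mulLeft R b)
  | 0, _, hD => fun p q => by simpa [mul_assoc] using hD (b * p) q
  | _ + 1, _, hD => fun a => by
    convert comp_mulLeft b (hD a) using 1
    ext; simp [mul_left_comm]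

/-- The set of `a` with `[D, a]` of order `≤ k` is a subalgebra, as
`[D, a b] = [D, a] b + a [D, b]`. -/
theorem succ_of_adjoin_eq_top {S : Set A} (hS : Algebra.adjoin R S = ⊤) {k : ℕ}
    {D : A →ₗ[R] A}
    (h : ∀ a ∈ S, IsDiffOp k (D ∘ₗ LinearMap.mulLeft R a - LinearMap.mulLeft R a ∘ₗ D)) :
    IsDiffOp (k + 1) D := by
  intro a
  induction (hS ▸ Algebra.mem_top : a ∈ Algebra.adjoin R S) using Algebra.adjoin_induction with
  | mem b hb => exact h b hb
  | algebraMap r =>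
    convert zero (R := R) (A := A) k using 1
    ext; simp [Algebra.algebraMap_eq_smul_one]
  | add b c _ _ hb hc =>
    convert hb.add hc using 1
    ext
    simp only [LinearMap.add_apply, LinearMap.sub_apply, LinearMap.comp_apply,
      LinearMap.mulLeft_apply, add_mul, map_add]
    ring
  | mul b c _ _ hb hc =>
    convert (comp_mulLeft c hb).add (mulLeft_comp b hc) using 1
    ext
    simp only [LinearMap.add_apply, LinearMap.sub_apply, LinearMap.comp_apply,
      LinearMap.mulLeft_apply, mul_assoc]
    ring

end IsDiffOp

namespace MvPolynomial

section CoeffSum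

variable {σ S : Type*} [CommRing S]

/-- The `S`-linear functional `g ↦ ∑ α, c α * coeff α g`. -/
noncomputable def coeffSum (c : (σ →₀ ℕ) → S) : MvPolynomial σ S →ₗ[S] S :=
  (basisMonomials σ S).constr S c

theorem coeffSum_monomial (c : (σ →₀ ℕ) → S) (α : σ →₀ ℕ) (s : S) :
    coeffSum c (monomial α s) = s * c α := by
  have : monomial α s = s • basisMonomials σ S α := by
    rw [coe_basisMonomials, smul_monomial, smul_eq_mul, mul_one]
  rw [this, map_smul, coeffSum, Module.Basis.constr_basis, smul_eq_mul]

theorem coeffSum_add (c d : (σ →₀ ℕ) → S) : coeffSum (c + d) = coeffSum c + coeffSum d :=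
  map_add _ c d

theorem coeffSum_C_mul (c : (σ →₀ ℕ) → S) (s : S) (g : MvPolynomial σ S) :
    coeffSum c (C s * g) = s * coeffSum c g := by
  rw [C_mul', map_smul, smul_eq_mul]

theorem coeffSum_X_mul (c : (σ →₀ ℕ) → S) (i : σ) (g : MvPolynomial σ S) :
    coeffSum c (X i * g) = coeffSum (fun α => c (α + Finsupp.single i 1)) g := by
  induction g using induction_on' with
  | monomial α s => rw [X, monomial_mul, one_mul, coeffSum_monomial, coeffSum_monomial, add_comm]
  | add g h hg hh => rw [mul_add, map_add, map_add, hg, hh]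

theorem coeffSum_eq_mul_constantCoeff {c : (σ →₀ ℕ) → S} (hc : ∀ α ≠ 0, c α = 0)
    (g : MvPolynomial σ S) : coeffSum c g = c 0 * constantCoeff g := by
  classical
  induction g using induction_on' with
  | monomial α s =>
    rw [coeffSum_monomial, constantCoeff_monomial]
    by_cases hα : α = 0
    · simp [hα, mul_comm]
    · simp [hα, hc α hα]
  | add g h hg hh => rw [map_add, map_add, hg, hh, mul_add]

end CoeffSum

variable {R σ : Type*} [CommRing R]

/-- `f ↦ f(X + Y)`, the outer variables playing the role of `Y`. -/
noncomputable def taylorExpand : MvPolynomial σ R →ₐ[R] MvPolynomial σ (MvPolynomial σ R) :=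
  aeval fun i => C (X i) + X i

theorem constantCoeff_taylorExpand (f : MvPolynomial σ R) :
    constantCoeff (taylorExpand f) = f := by
  induction f using induction_on with
  | C r => simp [taylorExpand]
  | add f g hf hg => rw [map_add, map_add, hf, hg]
  | mul_X f i hf =>
    rw [map_mul, map_mul, hf]
    simp [taylorExpand]

/-- The operator `∑ α, c α * ∂^(α)`, where the Hasse derivative `∂^(α) f` is the coefficient
of `Y ^ α` in `f(X + Y)`; on each polynomial only finitely many terms are nonzero. -/
noncomputable def hasseOp (c : (σ →₀ ℕ) → MvPolynomial σ R) :
    MvPolynomial σ R →ₗ[R] MvPolynomial σ R :=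
  (coeffSum c).restrictScalars R ∘ₗ taylorExpand.toLinearMap

theorem hasseOp_apply (c : (σ →₀ ℕ) → MvPolynomial σ R) (f : MvPolynomial σ R) :
    hasseOp c f = coeffSum c (taylorExpand f) := rfl

theorem hasseOp_add (c d : (σ →₀ ℕ) → MvPolynomial σ R) :
    hasseOp (c + d) = hasseOp c + hasseOp d :=
  LinearMap.ext fun f => LinearMap.congr_fun (coeffSum_add c d) (taylorExpand f)

theorem hasseOp_one (c : (σ →₀ ℕ) → MvPolynomial σ R) : hasseOp c 1 = c 0 := by
  rw [hasseOp_apply, map_one, ← C_1, ← monomial_zero', coeffSum_monomial, one_mul]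

theorem hasseOp_X_mul (c : (σ →₀ ℕ) → MvPolynomial σ R) (i : σ) (f : MvPolynomial σ R) :
    hasseOp c (X i * f) =
      X i * hasseOp c f + hasseOp (fun α => c (α + Finsupp.single i 1)) f := by
  simp only [hasseOp_apply, map_mul, taylorExpand, aeval_X, add_mul, map_add, coeffSum_C_mul,
    coeffSum_X_mul]

theorem isDiffOp_hasseOp {k : ℕ} {c : (σ →₀ ℕ) → MvPolynomial σ R}
    (hc : ∀ α, k < α.degree → c α = 0) : IsDiffOp k (hasseOp c) := by
  induction k generalizing c with
  | zero =>
    have hc0 : ∀ α ≠ 0, c α = 0 := fun α hα =>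
      hc α (Nat.pos_of_ne_zero ((Finsupp.degree_eq_zero_iff α).not.2 hα))
    intro p q
    simp only [hasseOp_apply, coeffSum_eq_mul_constantCoeff hc0, constantCoeff_taylorExpand,
      mul_assoc]
  | succ k ih =>
    refine IsDiffOp.succ_of_adjoin_eq_top (adjoin_range_X (R := R)) ?_
    rintro _ ⟨i, rfl⟩
    have hshift : IsDiffOp k (hasseOp fun α => c (α + Finsupp.single i 1)) :=
      ih fun α hα => hc _ (by rw [map_add, Finsupp.degree_single]; omega)
    convert hshift using 1
    refine LinearMap.ext fun f => ?_
    simp only [LinearMap.sub_apply, LinearMap.comp_apply, LinearMap.mulLeft_apply, hasseOp_X_mul]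
    ring

theorem hasseOp_monomial_one {c : (σ →₀ ℕ) → MvPolynomial σ R} {β : σ →₀ ℕ}
    (hc : ∀ α, α.degree < β.degree → c α = 0) : hasseOp c (monomial β 1) = c β := by
  induction h : β.degree generalizing β c with
  | zero =>
    rw [(Finsupp.degree_eq_zero_iff β).1 h, monomial_zero', C_1, hasseOp_one]
  | succ n ih =>
    obtain ⟨i, hi⟩ : ∃ i, β i ≠ 0 := Finsupp.ne_iff.1 fun (h0 : β = 0) => by simp [h0] at h
    set β' := β - Finsupp.single i 1
    have hβ : β' + Finsupp.single i 1 = β :=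
      tsub_add_cancel_of_le (Finsupp.single_le_iff.2 (Nat.one_le_iff_ne_zero.2 hi))
    have hβ' : β'.degree = n := by
      have := congrArg Finsupp.degree hβ
      simp only [map_add, Finsupp.degree_single] at this
      omega
    have hmul : monomial β (1 : R) = X i * monomial β' 1 := by
      rw [X, monomial_mul, one_mul, add_comm, hβ]
    rw [hmul, hasseOp_X_mul, ih (fun α hα => hc α (by omega)) hβ', hc β' (by omega), mul_zero,
      zero_add, ih (fun α hα => hc _ (by rw [map_add, Finsupp.degree_single]; omega)) hβ', hβ]

theorem exists_hasseOp_monomial_eq (ψ : (σ →₀ ℕ) → MvPolynomial σ R) (n : ℕ) :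
    ∃ c : (σ →₀ ℕ) → MvPolynomial σ R, (∀ α, n ≤ α.degree → c α = 0) ∧
      ∀ β : σ →₀ ℕ, β.degree < n → hasseOp c (monomial β 1) = ψ β := by
  induction n with
  | zero => exact ⟨0, fun _ _ => rfl, fun _ h => absurd h (Nat.not_lt_zero _)⟩
  | succ n ih =>
    obtain ⟨c, hc, hcψ⟩ := ih
    let d : (σ →₀ ℕ) → MvPolynomial σ R := fun α =>
      if α.degree = n then ψ α - hasseOp c (monomial α 1) else 0
    have hd : ∀ α, α.degree ≠ n → d α = 0 := fun α hα => if_neg hα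
    refine ⟨c + d, fun α hα => ?_, fun β hβ => ?_⟩
    · rw [Pi.add_apply, hc α (by omega), hd α (by omega), add_zero]
    · rw [hasseOp_add, LinearMap.add_apply,
        hasseOp_monomial_one (c := d) fun α hα => hd α (by omega)]
      rcases Nat.lt_succ_iff_lt_or_eq.1 hβ with hβ | hβ
      · rw [hcψ β hβ, hd β hβ.ne, add_zero]
      · simp only [d, if_pos hβ, add_sub_cancel]

theorem map_mul_of_forall_map_X_mul {D : MvPolynomial σ R →ₗ[R] MvPolynomial σ R}
    (hX : ∀ i p, D (X i * p) = X i * D p) (a p : MvPolynomial σ R) : D (a * p) = a * D p := by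
  induction a using induction_on generalizing p with
  | C r => rw [C_mul', C_mul', map_smul]
  | add a b ha hb => rw [add_mul, add_mul, map_add, ha, hb]
  | mul_X a i ha => rw [mul_assoc, ha, hX, mul_assoc]

theorem _root_.IsDiffOp.eq_zero_of_forall_mem_restrictTotalDegree {k : ℕ}
    {D : MvPolynomial σ R →ₗ[R] MvPolynomial σ R} (hD : IsDiffOp k D)
    (hD0 : ∀ p ∈ restrictTotalDegree σ R k, D p = 0) : D = 0 := by
  have h1 {k : ℕ} {D : MvPolynomial σ R →ₗ[R] MvPolynomial σ R}
      (hD0 : ∀ p ∈ restrictTotalDegree σ R k, D p = 0) : D 1 = 0 :=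
    hD0 1 ((mem_restrictTotalDegree _ _ _).2 (by simp))
  induction k generalizing D with
  | zero =>
    exact LinearMap.ext fun p => by rw [LinearMap.zero_apply, ← one_mul p, hD, h1 hD0, zero_mul]
  | succ k ih =>
    have hX : ∀ i p, D (X i * p) = X i * D p := fun i p => by
      have hXi : (X i : MvPolynomial σ R).totalDegree ≤ 1 :=
        (totalDegree_monomial_le _ _).trans_eq (Finsupp.degree_single i 1)
      have hcomm := ih (hD (X i)) fun p hp => by
        rw [mem_restrictTotalDegree] at hp
        have hXp : X i * p ∈ restrictTotalDegree σ R (k + 1) :=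
          (mem_restrictTotalDegree _ _ _).2 ((totalDegree_mul _ _).trans (by omega))
        have hp' : p ∈ restrictTotalDegree σ R (k + 1) :=
          (mem_restrictTotalDegree _ _ _).2 (by omega)
        simp [hD0 _ hXp, hD0 _ hp']
      simpa [sub_eq_zero] using LinearMap.congr_fun hcomm p
    exact LinearMap.ext fun p => by
      rw [LinearMap.zero_apply, ← mul_one p, map_mul_of_forall_map_X_mul hX, h1 hD0, mul_zero]

theorem restrictSupport_linearMap_ext {M : Type*} [AddCommMonoid M] [Module R M]
    {s : Set (σ →₀ ℕ)} {f g : restrictSupport R s →ₗ[R] M}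
    (h : ∀ β (hβ : β ∈ s), f ⟨monomial β 1, by simp [hβ]⟩ = g ⟨monomial β 1, by simp [hβ]⟩) :
    f = g := by
  classical
  refine (basisRestrictSupport R s).ext fun ⟨β, hβ⟩ => ?_
  have hbasis : basisRestrictSupport R s ⟨β, hβ⟩ = ⟨monomial β 1, by simp [hβ]⟩ := by
    rw [Module.Basis.apply_eq_iff]
    ext γ
    simp only [basisRestrictSupport, Finsupp.single_apply, Subtype.ext_iff, eq_comm]
    exact (coeff_monomial _ _ _).symm
  rw [hbasis, h β hβ]

end MvPolynomial

open MvPolynomial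

/-- Restriction to the span of monomials of degree at most `k` is a bijection from
differential operators of order `≤ k` on the polynomial algebra `R[x]` to linear maps
from that span into `R[x]`.  (The restriction map is visibly `R`-linear, so this is an
isomorphism of `R`-modules.) -/
theorem stmt_6 {R : Type*} [CommRing R] (x : Type*) (k : ℕ) :
    Function.Bijective
      (fun D : {D : MvPolynomial x R →ₗ[R] MvPolynomial x R // IsDiffOp k D} =>
        (D.1 ∘ₗ (MvPolynomial.restrictTotalDegree x R k).subtype :
          MvPolynomial.restrictTotalDegree x R k →ₗ[R] MvPolynomial x R)) := by
  refine ⟨fun D E hDE => Subtype.ext ?_, fun φ => ?_⟩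
  · refine sub_eq_zero.1 ((D.2.sub E.2).eq_zero_of_forall_mem_restrictTotalDegree fun p hp => ?_)
    simpa [sub_eq_zero] using LinearMap.congr_fun hDE ⟨p, hp⟩
  · obtain ⟨c, hc, hcφ⟩ := exists_hasseOp_monomial_eq
      (fun β => if hβ : β.degree ≤ k then φ ⟨monomial β 1,
        (mem_restrictTotalDegree _ _ _).2 ((totalDegree_monomial_le _ _).trans hβ)⟩ else 0) (k + 1)
    refine ⟨⟨hasseOp c, isDiffOp_hasseOp fun α hα => hc α hα⟩,
      restrictSupport_linearMap_ext fun β hβ => ?_⟩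
    exact (hcφ β (Nat.lt_succ_of_le hβ)).trans (dif_pos hβ)
end

section
/- Let N be the free R-module on the set of cyclic paths in the double quiver Q̄ (closed paths up to cyclic rotation), with 2 invertible in R. Define br⁺(a₁⋯a_m ⊗ b₁⋯b_n) = ∑_{i=1}^m ∑_{j=1}^n ⟨a_i, b_j⟩ · a_i a_{i+1} ⋯ a_{i-1} a_i b_j b_{j+1} ⋯ b_{j-1} b_j (indices cyclic), and br⁺ = 0 whenever one argument is a constant path. Then br⁺ is antisymmetric and satisfies the Jacobi identity, i.e., (N, br⁺) is a Lie algebra over R. -/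
open scoped Classical

variable {V E : Type*}

/-- Source map of the double quiver: the arrows are `E ⊕ E`, with `Sum.inl a` the original
arrow `a : s a → t a` and `Sum.inr a` its double `ā : t a → s a`. -/
def dsrc (s t : E → V) : E ⊕ E → V
  | Sum.inl a => s a
  | Sum.inr a => t a

/-- Target map of the double quiver. -/
def dtgt (s t : E → V) : E ⊕ E → V
  | Sum.inl a => t a
  | Sum.inr a => s a

/-- The canonical antisymmetric pairing `⟨-,-⟩` on arrows of the double quiver:
`⟨a, ā⟩ = 1 = -⟨ā, a⟩` for an original arrow `a`, and all other pairings vanish. -/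
def dpair [DecidableEq E] : E ⊕ E → E ⊕ E → ℤ
  | Sum.inl a, Sum.inr b => if a = b then 1 else 0
  | Sum.inr a, Sum.inl b => if a = b then -1 else 0
  | Sum.inl _, Sum.inl _ => 0
  | Sum.inr _, Sum.inr _ => 0

/-- A (nonempty) closed path in the double quiver, encoded as a periodic sequence of
composable arrows: `f i` is the `(i mod len)`-th arrow of the path. -/
structure RawLoop (s t : E → V) : Type _ where
  len : ℕ
  len_pos : 0 < len
  f : ℕ → E ⊕ E
  periodic : ∀ i, f (i + len) = f i
  closed : ∀ i, dtgt s t (f i) = dsrc s t (f (i + 1))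

/-- Two closed paths are identified when they differ by a cyclic rotation; the quotient
`Quot (RotRel s t)` is the set of (nonconstant) cyclic paths. -/
def RotRel (s t : E → V) (p q : RawLoop s t) : Prop :=
  p.len = q.len ∧ ∃ k, ∀ i, q.f i = p.f (i + k)

/-- The sequence of arrows `a_i a_{i+1} ⋯ a_{i-1} a_i b_j b_{j+1} ⋯ b_{j-1} b_j` (of length
`p.len + q.len + 2`) obtained from the closed paths `p`, `q` by inserting the pair of arrows
`a_i`, `b_j` at the chosen intersection. -/
def insSeq (s t : E → V) (p q : RawLoop s t) (i j : ℕ) : ℕ → E ⊕ E := fun r =>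
  if r % (p.len + q.len + 2) ≤ p.len then p.f (i + r % (p.len + q.len + 2))
  else q.f (j + (r % (p.len + q.len + 2) - (p.len + 1)))

/-- The term `⟨a_i, b_j⟩ • (a_i a_{i+1} ⋯ a_{i-1} a_i b_j b_{j+1} ⋯ b_{j-1} b_j)` of the
augmented necklace bracket, as an element of the free module on constant and cyclic paths. -/
noncomputable def insTerm (R : Type*) [CommRing R] [DecidableEq E] (s t : E → V)
    (p q : RawLoop s t) (i j : ℕ) : (V ⊕ Quot (RotRel s t)) →₀ R :=
  if h : ∀ r, dtgt s t (insSeq s t p q i j r) = dsrc s t (insSeq s t p q i j (r + 1)) then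
    dpair (p.f i) (q.f j) •
      Finsupp.single
        (Sum.inr (Quot.mk (RotRel s t)
          { len := p.len + q.len + 2
            len_pos := by omega
            f := insSeq s t p q i j
            periodic := fun r => by simp only [insSeq, Nat.add_mod_right]
            closed := h })) (1 : R)
  else 0

/-!
On basis loops, `[[p, q], z]` is a sum over double insertions: `q` is inserted into `p` at a pair
of arrows `(p_i, q_j)`, then `z` into the resulting loop at an arrow coming either from the copy
of `p` or from the copy of `q`. The term in which `z` meets `p_{i+k}` at `z_l` spells, up to
rotation, the same cyclic word as the term of `[[z, p], q]` in which `z_l` meets `p_{i+k}` and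
then `q_j` meets `p_i`; their coefficients `⟨p_i, q_j⟩⟨p_{i+k}, z_l⟩` and
`⟨z_l, p_{i+k}⟩⟨p_i, q_j⟩` are opposite. Hence the six partial sums of the Jacobiator cancel in
pairs. One level down, `[p, q]` and `[q, p]` give the same cyclic words with opposite
coefficients, and the diagonal terms of `[p, p]` vanish because `⟨a, a⟩ = 0`.
-/

open Finset

theorem Nat.add_mod_eq_add_of_mod_eq {r d M u : ℕ} (hu : r % M = u) (h : u + d < M) :
    (r + d) % M = u + d := by
  rw [← Nat.mod_add_mod, hu, Nat.mod_eq_of_lt h]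

theorem Nat.add_mod_eq_add_sub_of_mod_eq {r d M u : ℕ} (hu : r % M = u) (h₁ : M ≤ u + d)
    (h₂ : u + d < 2 * M) : (r + d) % M = u + d - M := by
  rw [← Nat.mod_add_mod, hu, Nat.mod_eq_sub_mod h₁, Nat.mod_eq_of_lt (by omega)]

theorem Finset.sum_range_add_of_periodic {M : Type*} [AddCancelCommMonoid M] {g : ℕ → M} {m : ℕ}
    (hg : Function.Periodic g m) (k : ℕ) :
    ∑ i ∈ range m, g (i + k) = ∑ i ∈ range m, g i := by
  induction k with
  | zero => rfl
  | succ k ih =>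
    have h := (sum_range_succ' (fun i => g (i + k)) m).symm.trans
      (sum_range_succ (fun i => g (i + k)) m)
    rw [zero_add, add_comm m k, hg k, add_left_inj, ih] at h
    simpa only [add_right_comm _ 1 k, ← add_assoc] using h

theorem Finset.sum_sum_eq_zero_of_antisymm {ι M : Type*} [AddCommGroup M] (s : Finset ι)
    {X : ι → ι → M} (hanti : ∀ i j, X j i = -X i j) (hdiag : ∀ i, X i i = 0) :
    ∑ i ∈ s, ∑ j ∈ s, X i j = 0 := by
  rw [← sum_product' (f := X)]
  refine sum_involution (fun a _ => a.swap) (fun a _ => ?_) (fun a _ hne heq => ?_)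
    (fun a ha => mem_product.2 ⟨(mem_product.1 ha).2, (mem_product.1 ha).1⟩)
    (fun a _ => a.swap_swap)
  · rw [Prod.fst_swap, Prod.snd_swap, hanti, neg_add_cancel]
  · have h : a.2 = a.1 := congrArg Prod.fst heq
    exact hne (by rw [h, hdiag])

theorem Finset.sum_comm₄ {α M : Type*} [AddCommMonoid M] {A B C D : Finset α}
    (F : α → α → α → α → M) :
    ∑ i ∈ A, ∑ j ∈ B, ∑ k ∈ C, ∑ l ∈ D, F i j k l
      = ∑ l ∈ D, ∑ k ∈ C, ∑ i ∈ A, ∑ j ∈ B, F i j k l :=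
  calc ∑ i ∈ A, ∑ j ∈ B, ∑ k ∈ C, ∑ l ∈ D, F i j k l
      = ∑ i ∈ A, ∑ j ∈ B, ∑ l ∈ D, ∑ k ∈ C, F i j k l :=
        sum_congr rfl fun _ _ => sum_congr rfl fun _ _ => sum_comm
    _ = ∑ l ∈ D, ∑ i ∈ A, ∑ j ∈ B, ∑ k ∈ C, F i j k l :=
        (sum_congr rfl fun _ _ => sum_comm).trans sum_comm
    _ = ∑ l ∈ D, ∑ k ∈ C, ∑ i ∈ A, ∑ j ∈ B, F i j k l :=
        sum_congr rfl fun _ _ => (sum_congr rfl fun _ _ => sum_comm).trans sum_comm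

namespace Finsupp

variable {α R M : Type*} [CommRing R] [AddCommGroup M] [Module R M]

theorem bilinear_antisymm_of_single (B : (α →₀ R) →ₗ[R] (α →₀ R) →ₗ[R] M)
    (h : ∀ a b, B (single a 1) (single b 1) = -B (single b 1) (single a 1)) (x y : α →₀ R) :
    B x y = -B y x := by
  have hB : B = -B.flip := by ext a b; simpa using h a b
  exact LinearMap.congr_fun₂ hB x y

theorem bilinear_self_eq_zero_of_single (B : (α →₀ R) →ₗ[R] (α →₀ R) →ₗ[R] M)
    (hanti : ∀ x y, B x y = -B y x) (hdiag : ∀ a, B (single a 1) (single a 1) = 0)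
    (x : α →₀ R) : B x x = 0 := by
  induction x using Finsupp.induction_linear with
  | zero => simp
  | add f g hf hg =>
    simp only [map_add, LinearMap.add_apply, hf, hg, hanti g f]
    abel
  | single a r =>
    rw [← smul_single_one]
    simp only [map_smul, LinearMap.smul_apply, hdiag, smul_zero]

theorem bilinear_jacobi_of_single (B : (α →₀ R) →ₗ[R] (α →₀ R) →ₗ[R] (α →₀ R))
    (h : ∀ a b c, B (B (single a 1) (single b 1)) (single c 1)
      + B (B (single b 1) (single c 1)) (single a 1)
      + B (B (single c 1) (single a 1)) (single b 1) = 0) (x y z : α →₀ R) :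
    B (B x y) z + B (B y z) x + B (B z x) y = 0 := by
  let rot : ((α →₀ R) →ₗ[R] (α →₀ R) →ₗ[R] (α →₀ R) →ₗ[R] (α →₀ R)) →
      ((α →₀ R) →ₗ[R] (α →₀ R) →ₗ[R] (α →₀ R) →ₗ[R] (α →₀ R)) :=
    fun T => (LinearMap.lflip.comp T).flip
  have hrot : ∀ T x y z, rot T x y z = T y z x := fun _ _ _ _ => rfl
  have hJ : B.compr₂ B + rot (B.compr₂ B) + rot (rot (B.compr₂ B)) = 0 := by
    ext a b c : 6
    simpa [hrot] using h a b c
  simpa [hrot] using DFunLike.congr_fun (LinearMap.congr_fun₂ hJ x y) z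

end Finsupp

section Words

variable {s t : E → V}

theorem RawLoop.ext_of_len_f {p q : RawLoop s t} (h₁ : p.len = q.len) (h₂ : p.f = q.f) :
    p = q := by
  cases p; cases q; simp_all

abbrev InsClosed (p q : RawLoop s t) (i j : ℕ) : Prop :=
  ∀ r, dtgt s t (insSeq s t p q i j r) = dsrc s t (insSeq s t p q i j (r + 1))

theorem insSeq_of_mod_le (p q : RawLoop s t) (i j : ℕ) {r x : ℕ} (hx : x ≤ p.len)
    (hr : r % (p.len + q.len + 2) = x) : insSeq s t p q i j r = p.f (i + x) := by
  rw [insSeq, hr, if_pos hx]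

theorem insSeq_of_lt_mod (p q : RawLoop s t) (i j : ℕ) {r x : ℕ} (hx : p.len < x)
    (hr : r % (p.len + q.len + 2) = x) :
    insSeq s t p q i j r = q.f (j + (x - (p.len + 1))) := by
  rw [insSeq, hr, if_neg (by omega)]

theorem insSeq_add_len_right (p q : RawLoop s t) (i j : ℕ) :
    insSeq s t p q i (j + q.len) = insSeq s t p q i j := by
  funext r
  unfold insSeq
  split
  · rfl
  · rw [add_right_comm, q.periodic]

def insLoop (p q : RawLoop s t) (i j : ℕ) (h : InsClosed p q i j) : RawLoop s t where
  len := p.len + q.len + 2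
  len_pos := by omega
  f := insSeq s t p q i j
  periodic := fun r => by simp only [insSeq, Nat.add_mod_right]
  closed := h

@[simp] theorem insLoop_len (p q : RawLoop s t) (i j : ℕ) (h : InsClosed p q i j) :
    (insLoop p q i j h).len = p.len + q.len + 2 := rfl

@[simp] theorem insLoop_f (p q : RawLoop s t) (i j : ℕ) (h : InsClosed p q i j) :
    (insLoop p q i j h).f = insSeq s t p q i j := rfl

theorem insLoop_f_of_le (p q : RawLoop s t) (i j : ℕ) {k : ℕ} (hk : k ≤ p.len)
    (h : InsClosed p q i j) : (insLoop p q i j h).f k = p.f (i + k) :=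
  insSeq_of_mod_le p q i j hk (Nat.mod_eq_of_lt (by omega))

theorem insLoop_f_len_add_sub (z p : RawLoop s t) (l i : ℕ) {k : ℕ} (hk : k ≤ p.len)
    (h : InsClosed z p l (i + k)) :
    (insLoop z p l (i + k) h).f (z.len + 1 + (p.len - k)) = p.f i := by
  rw [insLoop_f, insSeq_of_lt_mod z p l (i + k) (by omega) (Nat.mod_eq_of_lt (by omega)),
    show i + k + (z.len + 1 + (p.len - k) - (z.len + 1)) = i + p.len by omega, p.periodic]

theorem insSeq_swap_eq_rotate (p q : RawLoop s t) (i j r : ℕ) :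
    insSeq s t q p j i r = insSeq s t p q i j (r + (p.len + 1)) := by
  have hM : q.len + p.len + 2 = p.len + q.len + 2 := by omega
  have hu : r % (p.len + q.len + 2) < p.len + q.len + 2 := Nat.mod_lt _ (by omega)
  set u := r % (p.len + q.len + 2) with hru
  rcases Nat.lt_or_ge u (q.len + 1) with hc | hc
  · rw [insSeq_of_mod_le q p j i (by omega) (hM ▸ hru.symm),
      insSeq_of_lt_mod p q i j (x := u + (p.len + 1)) (by omega)
        (Nat.add_mod_eq_add_of_mod_eq hru.symm (by omega))]
    congr 1; omega
  · rw [insSeq_of_lt_mod q p j i (by omega) (hM ▸ hru.symm),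
      insSeq_of_mod_le p q i j (x := u - (q.len + 1)) (by omega)
        (by rw [Nat.add_mod_eq_add_sub_of_mod_eq hru.symm (by omega) (by omega)]; omega)]

/-- Both sides spell `p_i ⋯ p_{i+k} z_l ⋯ z_{l+|z|} p_{i+k} ⋯ p_{i+|p|} q_j ⋯ q_{j+|q|}`; the four
cases of the proof are its four blocks. -/
theorem insSeq_insLoop_rotate (p q z : RawLoop s t) (i j l : ℕ) {k : ℕ} (hk : k ≤ p.len)
    (h₁ : InsClosed p q i j) (h₂ : InsClosed z p l (i + k)) (r : ℕ) :
    insSeq s t (insLoop z p l (i + k) h₂) q (z.len + 1 + (p.len - k)) j r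
      = insSeq s t (insLoop p q i j h₁) z k l (r + (p.len + q.len + 2 - k)) := by
  set M := p.len + q.len + z.len + 4
  set D := p.len + q.len + 2 - k
  set K := z.len + 1 + (p.len - k)
  have e₁ : (insLoop z p l (i + k) h₂).len + q.len + 2 = M := by simp only [insLoop_len]; omega
  have e₂ : (insLoop p q i j h₁).len + z.len + 2 = M := by simp only [insLoop_len]; omega
  have hu : r % M < M := Nat.mod_lt _ (by omega)
  set u := r % M with hru
  have hru₁ : r % ((insLoop z p l (i + k) h₂).len + q.len + 2) = u := by rw [e₁]
  rcases Nat.lt_or_ge u (k + 1) with hc | hc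
  · rw [insSeq_of_mod_le _ q _ j (by simp only [insLoop_len]; omega) hru₁,
      insSeq_of_mod_le _ z k l (x := u + D) (by simp only [insLoop_len]; omega)
        (by rw [e₂]; exact Nat.add_mod_eq_add_of_mod_eq hru.symm (by omega)),
      insLoop_f, insLoop_f, insSeq_of_lt_mod z p l (i + k) (x := K + u) (by omega)
        (Nat.mod_eq_of_lt (by omega)),
      insSeq_of_mod_le p q i j (x := u) (by omega)
        (by rw [show k + (u + D) = u + (p.len + q.len + 2) by omega, Nat.add_mod_right]
            exact Nat.mod_eq_of_lt (by omega)),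
      show i + k + (K + u - (z.len + 1)) = (i + u) + p.len by omega, p.periodic]
  rcases Nat.lt_or_ge u (k + z.len + 2) with hc₂ | hc₂
  · rw [insSeq_of_mod_le _ q _ j (by simp only [insLoop_len]; omega) hru₁,
      insSeq_of_lt_mod _ z k l (x := u + D) (by simp only [insLoop_len]; omega)
        (by rw [e₂]; exact Nat.add_mod_eq_add_of_mod_eq hru.symm (by omega)),
      insLoop_f, insLoop_len, insSeq_of_mod_le z p l (i + k) (x := u - k - 1) (by omega)
        (by rw [show K + u = (u - k - 1) + (z.len + p.len + 2) by omega, Nat.add_mod_right]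
            exact Nat.mod_eq_of_lt (by omega))]
    congr 1; omega
  rcases Nat.lt_or_ge u (z.len + p.len + 3) with hc₃ | hc₃
  · rw [insSeq_of_mod_le _ q _ j (by simp only [insLoop_len]; omega) hru₁,
      insSeq_of_mod_le _ z k l (x := u + D - M) (by simp only [insLoop_len]; omega)
        (by rw [e₂]; exact Nat.add_mod_eq_add_sub_of_mod_eq hru.symm (by omega) (by omega)),
      insLoop_f, insLoop_f, insSeq_of_lt_mod z p l (i + k) (x := u - k - 1) (by omega)
        (by rw [show K + u = (u - k - 1) + (z.len + p.len + 2) by omega, Nat.add_mod_right]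
            exact Nat.mod_eq_of_lt (by omega)),
      insSeq_of_mod_le p q i j (x := k + (u + D - M)) (by omega) (Nat.mod_eq_of_lt (by omega))]
    congr 1; omega
  · rw [insSeq_of_lt_mod _ q _ j (by simp only [insLoop_len]; omega) hru₁,
      insSeq_of_mod_le _ z k l (x := u + D - M) (by simp only [insLoop_len]; omega)
        (by rw [e₂]; exact Nat.add_mod_eq_add_sub_of_mod_eq hru.symm (by omega) (by omega)),
      insLoop_f, insLoop_len, insSeq_of_lt_mod p q i j (x := k + (u + D - M)) (by omega)
        (Nat.mod_eq_of_lt (by omega))]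
    congr 1; omega

end Words

section Pairing

variable [DecidableEq E] {s t : E → V}

theorem dpair_antisymm (x y : E ⊕ E) : dpair x y = -dpair y x := by
  rcases x with a | a <;> rcases y with b | b <;> simp [dpair, eq_comm] <;> split <;> simp

theorem dpair_self (x : E ⊕ E) : dpair x x = 0 := by
  rcases x with a | a <;> rfl

theorem dtgt_eq_dsrc_of_dpair_ne_zero {x y : E ⊕ E} (h : dpair x y ≠ 0) :
    dtgt s t x = dsrc s t y ∧ dtgt s t y = dsrc s t x := by
  rcases x with a | a <;> rcases y with b | b <;> simp [dpair] at h <;>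
    subst h <;> simp [dsrc, dtgt]

theorem insClosed_of_dpair_ne_zero (p q : RawLoop s t) (i j : ℕ)
    (h : dpair (p.f i) (q.f j) ≠ 0) : InsClosed p q i j := by
  obtain ⟨hpq, hqp⟩ := dtgt_eq_dsrc_of_dpair_ne_zero (s := s) (t := t) h
  intro r
  have hu : r % (p.len + q.len + 2) < p.len + q.len + 2 := Nat.mod_lt _ (by omega)
  set u := r % (p.len + q.len + 2) with hru
  rcases Nat.lt_or_ge u p.len with hc | hc
  · rw [insSeq_of_mod_le p q i j (by omega) hru.symm,
      insSeq_of_mod_le p q i j (x := u + 1) (by omega)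
        (Nat.add_mod_eq_add_of_mod_eq hru.symm (by omega))]
    exact p.closed (i + u)
  rcases Nat.eq_or_lt_of_le hc with hc | hc
  · rw [insSeq_of_mod_le p q i j (by omega) hru.symm,
      insSeq_of_lt_mod p q i j (x := u + 1) (by omega)
        (Nat.add_mod_eq_add_of_mod_eq hru.symm (by omega)), ← hc, p.periodic,
      show j + (p.len + 1 - (p.len + 1)) = j by omega]
    exact hpq
  rcases Nat.lt_or_ge u (p.len + q.len + 1) with hc₂ | hc₂
  · rw [insSeq_of_lt_mod p q i j hc hru.symm,
      insSeq_of_lt_mod p q i j (x := u + 1) (by omega)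
        (Nat.add_mod_eq_add_of_mod_eq hru.symm (by omega)),
      show j + (u + 1 - (p.len + 1)) = j + (u - (p.len + 1)) + 1 by omega]
    exact q.closed _
  · rw [insSeq_of_lt_mod p q i j hc hru.symm,
      insSeq_of_mod_le p q i j (x := 0) (by omega)
        (by rw [Nat.add_mod_eq_add_sub_of_mod_eq hru.symm (by omega) (by omega)]; omega),
      show j + (u - (p.len + 1)) = j + q.len by omega, q.periodic, add_zero]
    exact hqp

end Pairing

section Bracket

variable (R : Type*) [CommRing R] [DecidableEq E] {s t : E → V}

noncomputable def loopVec (p : RawLoop s t) : (V ⊕ Quot (RotRel s t)) →₀ R :=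
  Finsupp.single (Sum.inr (Quot.mk (RotRel s t) p)) 1

theorem insTerm_of_insClosed (p q : RawLoop s t) (i j : ℕ) (h : InsClosed p q i j) :
    insTerm R s t p q i j = dpair (p.f i) (q.f j) • loopVec R (insLoop p q i j h) := by
  rw [insTerm, dif_pos h]
  rfl

theorem insTerm_of_dpair_eq_zero (p q : RawLoop s t) {i j : ℕ} (h : dpair (p.f i) (q.f j) = 0) :
    insTerm R s t p q i j = 0 := by
  unfold insTerm
  split
  · rw [h, zero_smul]
  · rfl

theorem insTerm_swap (p q : RawLoop s t) (i j : ℕ) :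
    insTerm R s t q p j i = -insTerm R s t p q i j := by
  by_cases h : dpair (p.f i) (q.f j) = 0
  · rw [insTerm_of_dpair_eq_zero R p q h,
      insTerm_of_dpair_eq_zero R q p (by rw [dpair_antisymm, h, neg_zero]), neg_zero]
  have h' : dpair (q.f j) (p.f i) ≠ 0 := by rwa [dpair_antisymm, neg_ne_zero]
  have hpq := insClosed_of_dpair_ne_zero p q i j h
  have hqp := insClosed_of_dpair_ne_zero q p j i h'
  have hrot : Quot.mk (RotRel s t) (insLoop q p j i hqp) = Quot.mk _ (insLoop p q i j hpq) :=
    (Quot.sound ⟨by simp only [insLoop_len]; omega, p.len + 1, insSeq_swap_eq_rotate p q i j⟩).symm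
  rw [insTerm_of_insClosed R q p j i hqp, insTerm_of_insClosed R p q i j hpq, loopVec, loopVec,
    hrot, dpair_antisymm, neg_smul]

noncomputable def insTerm₂ (p q z : RawLoop s t) (i j k l : ℕ) : (V ⊕ Quot (RotRel s t)) →₀ R :=
  if h : InsClosed p q i j then dpair (p.f i) (q.f j) • insTerm R s t (insLoop p q i j h) z k l
  else 0

theorem insTerm₂_add_len (p q z : RawLoop s t) (i j k l : ℕ) :
    insTerm₂ R p q z i (j + q.len) k l = insTerm₂ R p q z i j k l := by
  have hseq := insSeq_add_len_right p q i j
  unfold insTerm₂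
  by_cases h : InsClosed p q i j
  · have h' : InsClosed p q i (j + q.len) := by simpa only [InsClosed, hseq] using h
    rw [dif_pos h', dif_pos h, q.periodic,
      RawLoop.ext_of_len_f (p := insLoop p q i (j + q.len) h') (q := insLoop p q i j h) rfl hseq]
  · have h' : ¬InsClosed p q i (j + q.len) := by simpa only [InsClosed, hseq] using h
    rw [dif_neg h', dif_neg h]

theorem insTerm₂_eq_zero (p q z : RawLoop s t) {i j k l : ℕ}
    (h : dpair (p.f i) (q.f j) = 0 ∨ ∀ h, dpair ((insLoop p q i j h).f k) (z.f l) = 0) :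
    insTerm₂ R p q z i j k l = 0 := by
  unfold insTerm₂
  split
  · rcases h with h | h
    · rw [h, zero_smul]
    · rw [insTerm_of_dpair_eq_zero R _ z (h _), smul_zero]
  · rfl

theorem insTerm₂_add_insTerm₂_rotate (p q z : RawLoop s t) (i j l : ℕ) {k : ℕ} (hk : k ≤ p.len) :
    insTerm₂ R p q z i j k l + insTerm₂ R z p q l (i + k) (z.len + 1 + (p.len - k)) j = 0 := by
  by_cases h₁ : dpair (p.f i) (q.f j) = 0
  · rw [insTerm₂_eq_zero R p q z (.inl h₁),
      insTerm₂_eq_zero R z p q (.inr fun h => by rwa [insLoop_f_len_add_sub z p l i hk]),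
      add_zero]
  by_cases h₂ : dpair (p.f (i + k)) (z.f l) = 0
  · rw [insTerm₂_eq_zero R p q z (.inr fun h => by rwa [insLoop_f_of_le p q i j hk]),
      insTerm₂_eq_zero R z p q (.inl (by rw [dpair_antisymm, h₂, neg_zero])), add_zero]
  have h₂' : dpair (z.f l) (p.f (i + k)) ≠ 0 := by rwa [dpair_antisymm, neg_ne_zero]
  have c₁ := insClosed_of_dpair_ne_zero p q i j h₁
  have c₂ := insClosed_of_dpair_ne_zero z p l (i + k) h₂'
  have c₁z := insClosed_of_dpair_ne_zero (insLoop p q i j c₁) z k l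
    (by rwa [insLoop_f_of_le p q i j hk])
  have c₂q := insClosed_of_dpair_ne_zero (insLoop z p l (i + k) c₂) q _ j
    (by rwa [insLoop_f_len_add_sub z p l i hk])
  have hrot : Quot.mk (RotRel s t) (insLoop _ z k l c₁z) = Quot.mk _ (insLoop _ q _ j c₂q) :=
    Quot.sound ⟨by simp only [insLoop_len]; omega, _, insSeq_insLoop_rotate p q z i j l hk c₁ c₂⟩
  rw [insTerm₂, insTerm₂, dif_pos c₁, dif_pos c₂, insTerm_of_insClosed R _ z k l c₁z,
    insTerm_of_insClosed R _ q _ j c₂q, loopVec, loopVec, hrot, insLoop_f_of_le p q i j hk,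
    insLoop_f_len_add_sub z p l i hk, dpair_antisymm (z.f l), neg_smul, smul_comm,
    add_neg_cancel]

theorem sum_insTerm₂_add_sum_insTerm₂_rotate (p q z : RawLoop s t) :
    (∑ i ∈ range p.len, ∑ j ∈ range q.len, ∑ k ∈ range (p.len + 1), ∑ l ∈ range z.len,
        insTerm₂ R p q z i j k l)
      + (∑ l ∈ range z.len, ∑ i ∈ range p.len, ∑ x ∈ range (p.len + 1), ∑ j ∈ range q.len,
        insTerm₂ R z p q l i (z.len + 1 + x) j) = 0 := by
  have hreindex : ∀ l, ∑ i ∈ range p.len, ∑ x ∈ range (p.len + 1), ∑ j ∈ range q.len,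
        insTerm₂ R z p q l i (z.len + 1 + x) j
      = ∑ k ∈ range (p.len + 1), ∑ i ∈ range p.len, ∑ j ∈ range q.len,
        insTerm₂ R z p q l (i + k) (z.len + 1 + (p.len - k)) j := by
    intro l
    rw [sum_comm, ← sum_range_reflect]
    refine sum_congr rfl fun k _ => ?_
    rw [Nat.add_sub_cancel]
    exact (sum_range_add_of_periodic
      (fun i => sum_congr rfl fun j _ => insTerm₂_add_len R z p q l i _ j) k).symm
  rw [sum_congr rfl fun l _ => hreindex l, sum_comm₄]
  simp only [← sum_add_distrib]
  exact sum_eq_zero fun l _ => sum_eq_zero fun k hk => sum_eq_zero fun i _ =>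
    sum_eq_zero fun j _ =>
      insTerm₂_add_insTerm₂_rotate R p q z i j l (Nat.lt_succ_iff.1 (mem_range.1 hk))

end Bracket

section Jacobi

variable (R : Type*) [CommRing R] [DecidableEq E] {s t : E → V}
  (B : ((V ⊕ Quot (RotRel s t)) →₀ R) →ₗ[R] ((V ⊕ Quot (RotRel s t)) →₀ R) →ₗ[R]
    ((V ⊕ Quot (RotRel s t)) →₀ R))
  (hB : ∀ p q : RawLoop s t, B (loopVec R p) (loopVec R q) =
    ∑ i ∈ range p.len, ∑ j ∈ range q.len, insTerm R s t p q i j)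

include hB

theorem bracket_loopVec_swap (p q : RawLoop s t) :
    B (loopVec R p) (loopVec R q) = -B (loopVec R q) (loopVec R p) := by
  rw [hB, hB, sum_comm]
  simp only [insTerm_swap R p q, sum_neg_distrib, neg_neg]

theorem bracket_loopVec_self (p : RawLoop s t) : B (loopVec R p) (loopVec R p) = 0 := by
  rw [hB]
  exact sum_sum_eq_zero_of_antisymm _ (insTerm_swap R p p)
    (fun i => insTerm_of_dpair_eq_zero R p p (dpair_self _))

theorem bracket_insTerm_loopVec (p q z : RawLoop s t) (i j : ℕ) :
    B (insTerm R s t p q i j) (loopVec R z) =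
      ∑ k ∈ range (p.len + q.len + 2), ∑ l ∈ range z.len, insTerm₂ R p q z i j k l := by
  unfold insTerm₂
  by_cases h : InsClosed p q i j
  · simp only [dif_pos h, insTerm_of_insClosed R p q i j h, map_zsmul, LinearMap.smul_apply, hB,
      insLoop_len, smul_sum]
  · simp only [insTerm, dif_neg h, map_zero, LinearMap.zero_apply, sum_const_zero]

theorem bracket_bracket_loopVec (p q z : RawLoop s t) :
    B (B (loopVec R p) (loopVec R q)) (loopVec R z) =
      (∑ i ∈ range p.len, ∑ j ∈ range q.len, ∑ k ∈ range (p.len + 1), ∑ l ∈ range z.len,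
        insTerm₂ R p q z i j k l)
      + ∑ i ∈ range p.len, ∑ j ∈ range q.len, ∑ x ∈ range (q.len + 1), ∑ l ∈ range z.len,
        insTerm₂ R p q z i j (p.len + 1 + x) l := by
  simp only [hB, map_sum, LinearMap.sum_apply, bracket_insTerm_loopVec R B hB, ← sum_add_distrib]
  refine sum_congr rfl fun i _ => sum_congr rfl fun j _ => ?_
  rw [show p.len + q.len + 2 = (p.len + 1) + (q.len + 1) by omega, sum_range_add]

theorem jacobi_loopVec (p q z : RawLoop s t) :
    B (B (loopVec R p) (loopVec R q)) (loopVec R z)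
      + B (B (loopVec R q) (loopVec R z)) (loopVec R p)
      + B (B (loopVec R z) (loopVec R p)) (loopVec R q) = 0 := by
  rw [bracket_bracket_loopVec R B hB p q z, bracket_bracket_loopVec R B hB q z p,
    bracket_bracket_loopVec R B hB z p q]
  linear_combination (norm := abel) sum_insTerm₂_add_sum_insTerm₂_rotate R p q z
    + sum_insTerm₂_add_sum_insTerm₂_rotate R q z p + sum_insTerm₂_add_sum_insTerm₂_rotate R z p q

end Jacobi

theorem stmt_8_general [DecidableEq E] (s t : E → V) (R : Type*) [CommRing R]
    (B : ((V ⊕ Quot (RotRel s t)) →₀ R) →ₗ[R] ((V ⊕ Quot (RotRel s t)) →₀ R) →ₗ[R]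
      ((V ⊕ Quot (RotRel s t)) →₀ R))
    (hBv₁ : ∀ (v : V) (y : (V ⊕ Quot (RotRel s t)) →₀ R),
      B (Finsupp.single (Sum.inl v) 1) y = 0)
    (hBv₂ : ∀ (x : (V ⊕ Quot (RotRel s t)) →₀ R) (v : V),
      B x (Finsupp.single (Sum.inl v) 1) = 0)
    (hBval : ∀ p q : RawLoop s t,
      B (Finsupp.single (Sum.inr (Quot.mk (RotRel s t) p)) 1)
        (Finsupp.single (Sum.inr (Quot.mk (RotRel s t) q)) 1) =
      ∑ i ∈ Finset.range p.len, ∑ j ∈ Finset.range q.len, insTerm R s t p q i j) :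
    (∀ x, B x x = 0) ∧ (∀ x y, B x y = - B y x) ∧
      (∀ x y z, B (B x y) z + B (B y z) x + B (B z x) y = 0) := by
  have hanti : ∀ x y, B x y = -B y x := by
    refine Finsupp.bilinear_antisymm_of_single B ?_
    rintro (v | c) (w | d)
    any_goals simp only [hBv₁, hBv₂, neg_zero]
    induction c using Quot.ind
    induction d using Quot.ind
    exact bracket_loopVec_swap R B hBval _ _
  refine ⟨Finsupp.bilinear_self_eq_zero_of_single B hanti ?_, hanti,
    Finsupp.bilinear_jacobi_of_single B ?_⟩
  · rintro (v | c)
    · exact hBv₁ _ _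
    · induction c using Quot.ind
      exact bracket_loopVec_self R B hBval _
  · rintro (u | c) (v | d) (w | e)
    any_goals simp only [hBv₁, hBv₂, map_zero, LinearMap.zero_apply, add_zero]
    induction c using Quot.ind
    induction d using Quot.ind
    induction e using Quot.ind
    exact jacobi_loopVec R B hBval _ _ _

/-- The augmented necklace bracket `br⁺` — the bilinear operation on the free module `N`
on constant and cyclic paths of the double quiver which vanishes on constant paths and on
cyclic paths is given by
`br⁺(a₁⋯a_m ⊗ b₁⋯b_n) = ∑_{i,j} ⟨a_i, b_j⟩ a_i a_{i+1}⋯a_{i-1} a_i b_j b_{j+1}⋯b_{j-1} b_j`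
— is antisymmetric and satisfies the Jacobi identity, i.e. `(N, br⁺)` is a Lie algebra. -/
theorem stmt_8 [DecidableEq E] (s t : E → V) (R : Type*) [CommRing R] [Invertible (2 : R)]
    (B : ((V ⊕ Quot (RotRel s t)) →₀ R) →ₗ[R] ((V ⊕ Quot (RotRel s t)) →₀ R) →ₗ[R]
      ((V ⊕ Quot (RotRel s t)) →₀ R))
    (hBv₁ : ∀ (v : V) (y : (V ⊕ Quot (RotRel s t)) →₀ R),
      B (Finsupp.single (Sum.inl v) 1) y = 0)
    (hBv₂ : ∀ (x : (V ⊕ Quot (RotRel s t)) →₀ R) (v : V),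
      B x (Finsupp.single (Sum.inl v) 1) = 0)
    (hBval : ∀ p q : RawLoop s t,
      B (Finsupp.single (Sum.inr (Quot.mk (RotRel s t) p)) 1)
        (Finsupp.single (Sum.inr (Quot.mk (RotRel s t) q)) 1) =
      ∑ i ∈ Finset.range p.len, ∑ j ∈ Finset.range q.len, insTerm R s t p q i j) :
    (∀ x, B x x = 0) ∧ (∀ x y, B x y = - B y x) ∧
      (∀ x y z, B (B x y) z + B (B y z) x + B (B z x) y = 0) :=
  stmt_8_general s t R B hBv₁ hBv₂ hBval
end

section
/- Let R be a commutative ring and A a commutative R-algebra, and suppose the canonical algebra map R[X] → A from a polynomial algebra is surjective. Then any two differential operators of order ≤ k on A that agree on all products of at most k generators (including the empty product 1) are equal; equivalently, the restriction map from order-≤-k differential operators on A to linear maps on the span of monomials of degree ≤ k (in the generators) is injective. -/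
lemma IsDiffOp.sub_s13 {R A : Type*} [CommRing R] [CommRing A] [Algebra R A] :
    ∀ (k : ℕ) (D D' : A →ₗ[R] A), IsDiffOp k D → IsDiffOp k D' → IsDiffOp k (D - D')
  | 0, D, D', hD, hD' => fun x y => by
      simp only [LinearMap.sub_apply, hD x y, hD' x y, sub_mul]
  | k + 1, D, D', hD, hD' => fun a => by
      have h := IsDiffOp.sub_s13 k _ _ (hD a) (hD' a)
      have : (D - D') ∘ₗ LinearMap.mulLeft R a - LinearMap.mulLeft R a ∘ₗ (D - D')
          = (D ∘ₗ LinearMap.mulLeft R a - LinearMap.mulLeft R a ∘ₗ D)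
            - (D' ∘ₗ LinearMap.mulLeft R a - LinearMap.mulLeft R a ∘ₗ D') := by
        simp only [LinearMap.sub_comp, LinearMap.comp_sub]; abel
      rw [this]
      exact h

lemma diffop_vanish {R A : Type*} [CommRing R] [CommRing A] [Algebra R A]
    {X : Type*} (f : MvPolynomial X R →ₐ[R] A) (hf : Function.Surjective f) :
    ∀ (k : ℕ) (E : A →ₗ[R] A), IsDiffOp k E →
      (∀ p : MvPolynomial X R, p.totalDegree ≤ k → E (f p) = 0) → E = 0 := by
  intro k
  induction k with
  | zero =>
      intro E hE hvan
      have h1 : E 1 = 0 := by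
        have := hvan 1 (by simp)
        simpa using this
      ext x
      obtain ⟨p, rfl⟩ := hf x
      have : E (1 * f p) = E 1 * f p := hE 1 (f p)
      simpa [h1] using this
  | succ k ih =>
      intro E hE hvan
      -- for each variable, the commutator vanishes
      have hcomm : ∀ i : X, (E ∘ₗ LinearMap.mulLeft R (f (MvPolynomial.X i))
          - LinearMap.mulLeft R (f (MvPolynomial.X i)) ∘ₗ E) = 0 := by
        intro i
        apply ih _ (hE (f (MvPolynomial.X i)))
        intro p hp
        have hdeg : (MvPolynomial.X i * p).totalDegree ≤ k + 1 := by
          refine le_trans (MvPolynomial.totalDegree_mul _ _) ?_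
          have : (MvPolynomial.X i : MvPolynomial X R).totalDegree ≤ 1 := by
            rw [MvPolynomial.X]
            exact le_trans (MvPolynomial.totalDegree_monomial_le _ _) (by simp)
          omega
        have h1 : E (f (MvPolynomial.X i) * f p) = 0 := by
          rw [← map_mul]; exact hvan _ hdeg
        have h2 : E (f p) = 0 := hvan p (le_trans hp (by omega))
        simp [LinearMap.sub_apply, LinearMap.comp_apply, LinearMap.mulLeft_apply, h1, h2]
      have key : ∀ p : MvPolynomial X R, E (f p) = 0 := by
        intro p
        induction p using MvPolynomial.induction_on with
        | C a =>
            exact hvan _ (by simp)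
        | add p q hp hq =>
            simp [map_add, hp, hq]
        | mul_X p i hp =>
            have := congrArg (fun (g : A →ₗ[R] A) => g (f p)) (hcomm i)
            simp only [LinearMap.sub_apply, LinearMap.comp_apply,
              LinearMap.mulLeft_apply, LinearMap.zero_apply, sub_eq_zero] at this
            have : E (f (MvPolynomial.X i) * f p) = f (MvPolynomial.X i) * E (f p) := this
            rw [map_mul, mul_comm (f p), this, hp, mul_zero]
      ext x
      obtain ⟨p, rfl⟩ := hf x
      simp [key p]

/-- If `A` is generated as a commutative `R`-algebra by the image of a surjective algebra map
from a polynomial algebra, then two differential operators of order `≤ k` which agree on the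
image of the span of monomials of degree `≤ k` (in the generators) are equal; equivalently,
the restriction map on order-`≤ k` differential operators is injective. -/
theorem stmt_13 {R A : Type*} [CommRing R] [CommRing A] [Algebra R A]
    (X : Type*) (f : MvPolynomial X R →ₐ[R] A) (hf : Function.Surjective f)
    (k : ℕ) (D D' : A →ₗ[R] A)
    (hD : IsDiffOp k D) (hD' : IsDiffOp k D')
    (hagree : ∀ p ∈ MvPolynomial.restrictTotalDegree X R k, D (f p) = D' (f p)) :
    D = D' := by
  have h := diffop_vanish f hf k (D - D') (IsDiffOp.sub_s13 k D D' hD hD') ?_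
  · exact sub_eq_zero.mp h
  · intro p hp
    have := hagree p ((MvPolynomial.mem_restrictTotalDegree X k p).mpr hp)
    simp [LinearMap.sub_apply, this]
end

section
/- Let Q̄ be a double quiver and for each vertex i let V_i be a finite-dimensional vector space over a field k of characteristic 0. Let Rep = ⊕_{a ∈ Q̄₁} Hom(V_{s(a)}, V_{t(a)}) be the representation space, and for a closed path p = a₁⋯a_n define tr(p) ∈ O(Rep) by tr(p)(f) = trace(f_{a_n} ∘ ⋯ ∘ f_{a₁}), and tr(e_i) = dim V_i. Then tr(p) depends only on the cyclic equivalence class of p, and the induced algebra map tr: S(N) → O(Rep) from the free commutative algebra on cyclic paths intertwines the necklace Lie bracket br⁻ with the constant-coefficient Poisson bracket on O(Rep) determined on linear coordinate functions by the trace pairings: {x^a_{uv}, x^{ā}_{wz}} = δ_{uz} δ_{vw} for a ∈ Q₁ (and the antisymmetric extension), all other brackets of coordinates zero. -/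
open scoped Classical

variable {V E : Type*}

/-- A coordinate function on the representation space of the double quiver: a matrix entry
`x^d_{u v}` of the component at the arrow `d`, where `u` indexes a basis of the vector
space at the target of `d` and `v` a basis of the vector space at the source. -/
abbrev RCoord (s t : E → V) (nV : V → ℕ) :=
  Σ d : E ⊕ E, Fin (nV (dtgt s t d)) × Fin (nV (dsrc s t d))

/-- Compatibility of dimensions along a closed path (cyclically). -/
theorem stepEq (s t : E → V) (nV : V → ℕ) (p : RawLoop s t) (i : Fin p.len) :
    nV (dsrc s t (p.f (((i : ℕ) + 1) % p.len))) = nV (dtgt s t (p.f (i : ℕ))) := by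
  have h1 : p.f (((i : ℕ) + 1) % p.len) = p.f ((i : ℕ) + 1) := by
    rcases Nat.lt_or_ge ((i : ℕ) + 1) p.len with h | h
    · rw [Nat.mod_eq_of_lt h]
    · have hi : (i : ℕ) + 1 = p.len := by have := i.isLt; omega
      rw [hi, Nat.mod_self]
      have h0 := p.periodic 0
      simpa using h0.symm
  rw [h1, ← p.closed (i : ℕ)]

/-- The trace function of a closed path `p = a₁⋯a_m`, as a polynomial in the matrix
coordinates: `tr(p) = ∑_u ∏_i x^{a_i}_{u_{i+1} u_i}`, i.e. the function sending a
representation `f` to `trace (f_{a_m} ∘ ⋯ ∘ f_{a_1})`. -/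
noncomputable def trPoly (K : Type*) [CommRing K] (s t : E → V) (nV : V → ℕ)
    (p : RawLoop s t) : MvPolynomial (RCoord s t nV) K :=
  ∑ u : (∀ i : Fin p.len, Fin (nV (dsrc s t (p.f (i : ℕ))))),
    ∏ i : Fin p.len,
      MvPolynomial.X
        ⟨p.f (i : ℕ),
          (Fin.cast (stepEq s t nV p i) (u ⟨((i : ℕ) + 1) % p.len, Nat.mod_lt _ i.pos⟩),
            u i)⟩

/-- The concatenated sequence `a_{i+1} ⋯ a_{i-1} b_{j+1} ⋯ b_{j-1}` appearing in the
classical necklace bracket. -/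
def concatSeq (s t : E → V) (p q : RawLoop s t) (i j : ℕ) : ℕ → E ⊕ E := fun r =>
  if r % (p.len - 1 + (q.len - 1)) < p.len - 1 then
    p.f (i + 1 + r % (p.len - 1 + (q.len - 1)))
  else q.f (j + 1 + (r % (p.len - 1 + (q.len - 1)) - (p.len - 1)))

/-- The trace function of the term `e_{t(a_i)} a_{i+1}⋯a_{i-1} b_{j+1}⋯b_{j-1}` of the
classical necklace bracket: the constant `dim V_{t(a_i)}` when both loops have length one,
and the trace function of the concatenated loop otherwise. -/
noncomputable def brMTermPoly (K : Type*) [CommRing K] (s t : E → V) (nV : V → ℕ)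
    (p q : RawLoop s t) (i j : ℕ) : MvPolynomial (RCoord s t nV) K :=
  if hL : p.len - 1 + (q.len - 1) = 0 then
    MvPolynomial.C ((nV (dtgt s t (p.f i)) : K))
  else if h : ∀ r, dtgt s t (concatSeq s t p q i j r) = dsrc s t (concatSeq s t p q i j (r + 1)) then
    trPoly K s t nV
      { len := p.len - 1 + (q.len - 1)
        len_pos := Nat.pos_of_ne_zero hL
        f := concatSeq s t p q i j
        periodic := fun r => by simp only [concatSeq, Nat.add_mod_right]
        closed := h }
  else 0


/-!
Pad every representation matrix with zeros to a common size `N × N` (`arrowMat`). Then `tr(p)`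
is the trace of the ordered product `X_{a_m} ⋯ X_{a_1}` of the arrow matrices, and invariance
under rotation is the cyclicity of the trace.

For the bracket, `{-, g}` is a derivation, so
`{tr p, tr q} = ∑_k ∑_{c,d} {x^{a_k}_{cd}, tr q} (R_k)_{dc}`, where `R_k` is the matrix of the
path `a_{k+1} ⋯ a_{k-1}` left after cutting `a_k` out of `p`. In the same way
`{x^a_{cd}, tr q} = ∑_l ⟨a, b_l⟩ (S_l)_{cd}` on the dimension box of `a`. So the `(k, l)` term
is `⟨a_k, b_l⟩ tr(S_l R_k)`, and `S_l R_k` is the matrix of the glued loop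
`a_{k+1} ⋯ a_{k-1} b_{l+1} ⋯ b_{l-1}`; when both loops are single arrows, the box restriction
turns `S_l R_k = 1` into the projection onto `V_{t(a_k)}`, of trace `dim V_{t(a_k)}`.
-/

open MvPolynomial Matrix Finset

section WordProd

variable {ι A : Type*} [Fintype ι] [DecidableEq ι]

def wordProd [Semiring A] (g : ℕ → Matrix ι ι A) : ℕ → ℕ → Matrix ι ι A
  | _, 0 => 1
  | k, n + 1 => wordProd g (k + 1) n * g k

section Semiring

variable [Semiring A] (g : ℕ → Matrix ι ι A)

@[simp] theorem wordProd_zero (k : ℕ) : wordProd g k 0 = 1 := rfl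

theorem wordProd_succ (k n : ℕ) : wordProd g k (n + 1) = wordProd g (k + 1) n * g k := rfl

theorem wordProd_add (k a b : ℕ) :
    wordProd g k (a + b) = wordProd g (k + a) b * wordProd g k a := by
  induction a generalizing k with
  | zero => simp
  | succ a ih =>
    rw [show a + 1 + b = a + b + 1 by omega, wordProd_succ, ih, wordProd_succ, mul_assoc,
      show k + 1 + a = k + (a + 1) by omega]

theorem wordProd_succ' (k n : ℕ) : wordProd g k (n + 1) = g (k + n) * wordProd g k n := by
  rw [wordProd_add, wordProd_succ, wordProd_zero, one_mul]

theorem wordProd_congr {g g' : ℕ → Matrix ι ι A} {k k' n : ℕ}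
    (h : ∀ r < n, g (k + r) = g' (k' + r)) : wordProd g k n = wordProd g' k' n := by
  induction n generalizing k k' with
  | zero => rfl
  | succ n ih =>
    have hsucc : ∀ r < n, g (k + 1 + r) = g' (k' + 1 + r) := fun r hr => by
      simpa [add_assoc, add_comm 1] using h (r + 1) (by omega)
    have h0 : g k = g' k' := by simpa using h 0 (by omega)
    rw [wordProd_succ, wordProd_succ, ih hsucc, h0]

theorem wordProd_add_period {L : ℕ} (hg : Function.Periodic g L) (k n : ℕ) :
    wordProd g (k + L) n = wordProd g k n :=
  wordProd_congr fun r _ => by rw [add_right_comm, hg]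

end Semiring

section CommSemiring

variable [CommSemiring A] (g : ℕ → Matrix ι ι A)

theorem trace_wordProd_shift {L : ℕ} (hg : Function.Periodic g L) (k : ℕ) :
    trace (wordProd g k L) = trace (wordProd g 0 L) := by
  induction k with
  | zero => rfl
  | succ k ih =>
    rw [← ih]
    cases L with
    | zero => rfl
    | succ n =>
      rw [wordProd_succ', wordProd_succ, show k + 1 + n = k + (n + 1) by omega, hg,
        trace_mul_comm]

theorem wordProd_apply (k n : ℕ) (a b : ι) :
    wordProd g k n a b = ∑ u : Fin n → ι,
      if Fin.snoc (α := fun _ => ι) u a 0 = b then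
        ∏ r : Fin n, g (k + r) (Fin.snoc (α := fun _ => ι) u a r.succ)
          (Fin.snoc (α := fun _ => ι) u a r.castSucc)
      else 0 := by
  induction n generalizing k b with
  | zero =>
    rw [Fintype.sum_unique]
    simp [Matrix.one_apply, Fin.snoc]
  | succ n ih =>
    rw [← (Fin.consEquiv fun _ => ι).sum_comp, Fintype.sum_prod_type, wordProd_succ, mul_apply]
    simp only [Fin.consEquiv, Equiv.coe_fn_mk, ← Fin.cons_snoc_eq_snoc_cons, Fin.cons_zero,
      Fin.prod_univ_succ, ← Fin.succ_castSucc, Fin.cons_succ, Fin.castSucc_zero, Fin.val_succ,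
      Fin.val_zero, ih, Finset.sum_mul, ite_mul, zero_mul]
    rw [Finset.sum_comm, Finset.sum_comm (γ := ι)]
    simp only [Finset.sum_ite_eq, Finset.sum_ite_eq', Finset.mem_univ, if_true, add_zero]
    refine Finset.sum_congr rfl fun u _ => ?_
    simp only [← add_assoc, Nat.add_right_comm k _ 1, mul_comm]

theorem trace_wordProd (n : ℕ) [NeZero n] :
    trace (wordProd g 0 n) = ∑ u : Fin n → ι, ∏ r : Fin n, g r (u (r + 1)) (u r) := by
  obtain ⟨m, rfl⟩ : ∃ m, n = m + 1 := ⟨n - 1, by have := NeZero.ne n; omega⟩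
  have hsnoc : ∀ (u : Fin (m + 1) → ι) (r : Fin (m + 1)),
      Fin.snoc (α := fun _ => ι) u (u 0) r.succ = u (r + 1) := by
    intro u r
    induction r using Fin.lastCases with
    | last => simp
    | cast r => rw [Fin.succ_castSucc, Fin.snoc_castSucc, Fin.coeSucc_eq_succ]
  simp only [trace, Matrix.diag, wordProd_apply, ← Fin.castSucc_zero, Fin.snoc_castSucc,
    zero_add]
  rw [Finset.sum_comm]
  simp only [Finset.sum_ite_eq, Finset.mem_univ, if_true, hsnoc]

end CommSemiring

section Derivation

variable {R : Type*} [CommSemiring R] [CommSemiring A] [Algebra R A] (D : Derivation R A A)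

theorem map_derivation_mul {l m n : Type*} [Fintype m] (M : Matrix l m A) (M' : Matrix m n A) :
    (M * M').map D = M.map D * M' + M * M'.map D := by
  ext a b
  simp only [map_apply, Matrix.add_apply, mul_apply, map_sum, Derivation.leibniz, smul_eq_mul,
    Finset.sum_add_distrib]
  rw [add_comm, Finset.sum_congr rfl fun _ _ => mul_comm _ _]

theorem map_derivation_wordProd (g : ℕ → Matrix ι ι A) (k n : ℕ) :
    (wordProd g k n).map D = ∑ r ∈ range n,
      wordProd g (k + r + 1) (n - 1 - r) * (g (k + r)).map D * wordProd g k r := by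
  induction n with
  | zero =>
    ext a b
    by_cases h : a = b <;> simp [h]
  | succ n ih =>
    rw [wordProd_succ', map_derivation_mul, ih, Finset.sum_range_succ, Finset.mul_sum, add_comm]
    congr 1
    · refine Finset.sum_congr rfl fun r hr => ?_
      have hr : r < n := Finset.mem_range.1 hr
      rw [← mul_assoc, ← mul_assoc, show n + 1 - 1 - r = n - 1 - r + 1 by omega, wordProd_succ',
        show k + r + 1 + (n - 1 - r) = k + n by omega]
    · simp

theorem derivation_trace_wordProd (g : ℕ → Matrix ι ι A) {L : ℕ}
    (hg : Function.Periodic g L) :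
    D (trace (wordProd g 0 L)) =
      ∑ r ∈ range L, trace ((g r).map D * wordProd g (r + 1) (L - 1)) := by
  rw [AddMonoidHom.map_trace, map_derivation_wordProd, trace_sum]
  refine Finset.sum_congr rfl fun r hr => ?_
  have hr : r < L := Finset.mem_range.1 hr
  have hwrap : wordProd g (r + 1) (L - 1) = wordProd g 0 r * wordProd g (r + 1) (L - 1 - r) := by
    rw [show L - 1 = (L - 1 - r) + r by omega, wordProd_add, Nat.add_sub_cancel,
      show r + 1 + (L - 1 - r) = 0 + L by omega, wordProd_add_period g hg]
  rw [zero_add, hwrap, Matrix.mul_assoc, trace_mul_comm, Matrix.mul_assoc]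

end Derivation

end WordProd

section Quiver

variable {V E : Type*} (s t : E → V) (nV : V → ℕ) (K : Type*) [CommRing K] (N : ℕ)

noncomputable def arrowMat (d : E ⊕ E) :
    Matrix (Fin N) (Fin N) (MvPolynomial (RCoord s t nV) K) :=
  Matrix.of fun a b =>
    if h : (a : ℕ) < nV (dtgt s t d) ∧ (b : ℕ) < nV (dsrc s t d) then
      X ⟨d, (⟨a, h.1⟩, ⟨b, h.2⟩)⟩
    else 0

noncomputable def pathMat (f : ℕ → E ⊕ E) :
    ℕ → ℕ → Matrix (Fin N) (Fin N) (MvPolynomial (RCoord s t nV) K) :=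
  wordProd fun r => arrowMat s t nV K N (f r)

noncomputable def projMat (v : V) : Matrix (Fin N) (Fin N) (MvPolynomial (RCoord s t nV) K) :=
  diagonal fun c => if (c : ℕ) < nV v then 1 else 0

theorem RawLoop.exists_dim_bound (p : RawLoop s t) : ∃ N, ∀ k, nV (dsrc s t (p.f k)) ≤ N := by
  refine ⟨∑ k ∈ range p.len, nV (dsrc s t (p.f k)), fun k => ?_⟩
  rw [← Function.Periodic.map_mod_nat p.periodic k]
  exact Finset.single_le_sum (f := fun k => nV (dsrc s t (p.f k))) (fun _ _ => Nat.zero_le _)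
    (mem_range.2 (Nat.mod_lt _ p.len_pos))

theorem trPoly_eq_trace (p : RawLoop s t) (hN : ∀ k, nV (dsrc s t (p.f k)) ≤ N) :
    trPoly K s t nV p = trace (pathMat s t nV K N p.f 0 p.len) := by
  have : NeZero p.len := ⟨p.len_pos.ne'⟩
  have hsucc : ∀ r : Fin p.len, r + 1 = ⟨((r : ℕ) + 1) % p.len, Nat.mod_lt _ r.pos⟩ :=
    fun r => Fin.ext (by simp [Fin.val_add])
  rw [pathMat, trace_wordProd]
  simp only [arrowMat, of_apply]
  -- index tuples leaving the dimension boxes contribute zero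
  rw [← Finset.sum_filter_of_ne (p := fun u : Fin p.len → Fin N =>
    ∀ k, (u k : ℕ) < nV (dsrc s t (p.f k)))]
  · refine Finset.sum_bij' (fun u _ k => Fin.castLE (hN k) (u k))
      (fun v hv k => ⟨v k, (Finset.mem_filter.1 hv).2 k⟩)
      (fun u _ => Finset.mem_filter.2 ⟨Finset.mem_univ _, fun k => (u k).isLt⟩)
      (fun _ _ => Finset.mem_univ _) (fun _ _ => rfl) (fun _ _ => rfl) fun u _ => ?_
    refine Finset.prod_congr rfl fun r _ => ?_
    have hr : (u ⟨((r : ℕ) + 1) % p.len, Nat.mod_lt _ r.pos⟩ : ℕ) < nV (dtgt s t (p.f r)) :=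
      (u _).isLt.trans_eq <| by
        change nV (dsrc s t (p.f (((r : ℕ) + 1) % p.len))) = _
        rw [Function.Periodic.map_mod_nat p.periodic, ← p.closed]
    rw [dif_pos (by rw [hsucc]; exact ⟨hr, (u r).isLt⟩)]
    congr 1
    refine Sigma.ext rfl (heq_of_eq (Prod.ext (Fin.ext ?_) rfl))
    simp only [Fin.val_cast, Fin.val_castLE]
    rw [hsucc]
  · intro u _ hu k
    by_contra hk
    exact hu (Finset.prod_eq_zero (Finset.mem_univ k) (dif_neg fun h => hk h.2))

theorem trPoly_eq_of_rotate (p q : RawLoop s t) (hL : p.len = q.len) {m : ℕ}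
    (hm : ∀ r, q.f r = p.f (r + m)) : trPoly K s t nV p = trPoly K s t nV q := by
  obtain ⟨N, hN⟩ := RawLoop.exists_dim_bound s t nV p
  have hNq : ∀ k, nV (dsrc s t (q.f k)) ≤ N := fun k => hm k ▸ hN _
  rw [trPoly_eq_trace s t nV K N p hN, trPoly_eq_trace s t nV K N q hNq, ← hL, pathMat, pathMat,
    ← trace_wordProd_shift _ (fun r => by rw [p.periodic]) m]
  exact congrArg trace (wordProd_congr fun r _ => by rw [hm, zero_add, add_comm])

theorem derivation_trace_pathMat
    (D : Derivation K (MvPolynomial (RCoord s t nV) K) (MvPolynomial (RCoord s t nV) K))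
    (p : RawLoop s t) :
    D (trace (pathMat s t nV K N p.f 0 p.len)) = ∑ k ∈ range p.len,
      trace ((arrowMat s t nV K N (p.f k)).map D * pathMat s t nV K N p.f (k + 1) (p.len - 1)) :=
  derivation_trace_wordProd D _ fun r => congrArg (arrowMat s t nV K N) (p.periodic r)

theorem projMat_mul_arrowMat (d : E ⊕ E) :
    projMat s t nV K N (dtgt s t d) * arrowMat s t nV K N d = arrowMat s t nV K N d := by
  ext a b
  simp only [projMat, arrowMat, diagonal_mul, of_apply]
  split_ifs <;> simp_all

theorem arrowMat_mul_projMat (d : E ⊕ E) :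
    arrowMat s t nV K N d * projMat s t nV K N (dsrc s t d) = arrowMat s t nV K N d := by
  ext a b
  simp only [projMat, arrowMat, mul_diagonal, of_apply]
  split_ifs <;> simp_all

theorem projMat_mul_pathMat_mul_projMat (f : ℕ → E ⊕ E) (k n : ℕ) :
    projMat s t nV K N (dtgt s t (f (k + n))) * pathMat s t nV K N f k (n + 1) *
      projMat s t nV K N (dsrc s t (f k)) = pathMat s t nV K N f k (n + 1) := by
  have hleft : projMat s t nV K N (dtgt s t (f (k + n))) * pathMat s t nV K N f k (n + 1) =
      pathMat s t nV K N f k (n + 1) := by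
    rw [pathMat, wordProd_succ', ← Matrix.mul_assoc, projMat_mul_arrowMat]
  rw [hleft, pathMat, wordProd_succ, Matrix.mul_assoc, arrowMat_mul_projMat]

theorem trace_projMat_mul_self (v : V) (hv : nV v ≤ N) :
    trace (projMat s t nV K N v * projMat s t nV K N v) = nV v := by
  simp only [projMat, diagonal_mul_diagonal, trace_diagonal, mul_boole, ← ite_and, and_self,
    Finset.sum_boole, Fin.card_filter_val_lt, min_eq_right hv]

end Quiver

section Concat

variable {V E : Type*} {s t : E → V}

theorem RawLoop.dtgt_add_len_sub_one (p : RawLoop s t) (k : ℕ) :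
    dtgt s t (p.f (k + (p.len - 1))) = dsrc s t (p.f k) := by
  rw [p.closed, show k + (p.len - 1) + 1 = k + p.len by have := p.len_pos; omega, p.periodic]

variable {p q : RawLoop s t} {i j : ℕ}

theorem concatSeq_of_lt {r : ℕ} (hr : r < p.len - 1) :
    concatSeq s t p q i j r = p.f (i + 1 + r) := by
  simp only [concatSeq, Nat.mod_eq_of_lt (show r < p.len - 1 + (q.len - 1) by omega), if_pos hr]

theorem concatSeq_of_le {r : ℕ} (hr₁ : p.len - 1 ≤ r) (hr₂ : r < p.len - 1 + (q.len - 1)) :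
    concatSeq s t p q i j r = q.f (j + 1 + (r - (p.len - 1))) := by
  simp only [concatSeq, Nat.mod_eq_of_lt hr₂, if_neg (show ¬r < p.len - 1 by omega)]

theorem concatSeq_mod (r : ℕ) :
    concatSeq s t p q i j (r % (p.len - 1 + (q.len - 1))) = concatSeq s t p q i j r := by
  simp only [concatSeq, Nat.mod_mod]

theorem dsrc_concatSeq_zero (hTS : dtgt s t (q.f j) = dsrc s t (p.f i))
    (hM : p.len - 1 + (q.len - 1) ≠ 0) :
    dsrc s t (concatSeq s t p q i j 0) = dtgt s t (p.f i) := by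
  rcases Nat.lt_or_ge 0 (p.len - 1) with hp | hp
  · rw [concatSeq_of_lt hp, add_zero, p.closed]
  · rw [concatSeq_of_le hp (by omega), show j + 1 + (0 - (p.len - 1)) = j + 1 by omega,
      ← q.closed, hTS, ← p.dtgt_add_len_sub_one, show p.len - 1 = 0 by omega, add_zero]

theorem dtgt_concatSeq_last (hST : dsrc s t (q.f j) = dtgt s t (p.f i))
    (hTS : dtgt s t (q.f j) = dsrc s t (p.f i)) (hM : p.len - 1 + (q.len - 1) ≠ 0) :
    dtgt s t (concatSeq s t p q i j (p.len - 1 + (q.len - 1) - 1)) = dtgt s t (p.f i) := by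
  rcases Nat.lt_or_ge (p.len - 1 + (q.len - 1) - 1) (p.len - 1) with hq | hq
  · rw [concatSeq_of_lt hq, show i + 1 + (p.len - 1 + (q.len - 1) - 1) = i + (p.len - 1) by omega,
      p.dtgt_add_len_sub_one, ← hTS, ← hST, ← q.dtgt_add_len_sub_one,
      show q.len - 1 = 0 by omega, add_zero]
  · rw [concatSeq_of_le hq (by omega),
      show j + 1 + (p.len - 1 + (q.len - 1) - 1 - (p.len - 1)) = j + (q.len - 1) by omega,
      q.dtgt_add_len_sub_one, hST]

theorem concatSeq_closed_of_lt (hTS : dtgt s t (q.f j) = dsrc s t (p.f i)) {x : ℕ}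
    (hx : x + 1 < p.len - 1 + (q.len - 1)) :
    dtgt s t (concatSeq s t p q i j x) = dsrc s t (concatSeq s t p q i j (x + 1)) := by
  rcases Nat.lt_or_ge (x + 1) (p.len - 1) with h | h
  · rw [concatSeq_of_lt (by omega), concatSeq_of_lt h, p.closed, add_assoc]
  rcases Nat.lt_or_ge x (p.len - 1) with h' | h'
  · rw [concatSeq_of_lt h', concatSeq_of_le h hx, show i + 1 + x = i + (p.len - 1) by omega,
      p.dtgt_add_len_sub_one, show x + 1 - (p.len - 1) = 0 by omega, add_zero, ← q.closed, hTS]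
  · rw [concatSeq_of_le h' (by omega), concatSeq_of_le h hx, q.closed,
      show j + 1 + (x - (p.len - 1)) + 1 = j + 1 + (x + 1 - (p.len - 1)) by omega]

theorem concatSeq_closed (hST : dsrc s t (q.f j) = dtgt s t (p.f i))
    (hTS : dtgt s t (q.f j) = dsrc s t (p.f i)) (hM : p.len - 1 + (q.len - 1) ≠ 0) (r : ℕ) :
    dtgt s t (concatSeq s t p q i j r) = dsrc s t (concatSeq s t p q i j (r + 1)) := by
  set M := p.len - 1 + (q.len - 1)
  have hlt := Nat.mod_lt r (Nat.pos_of_ne_zero hM)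
  rw [← concatSeq_mod r, ← concatSeq_mod (r + 1), ← Nat.mod_add_mod r M 1]
  rcases Nat.lt_or_ge (r % M + 1) M with h | h
  · rw [Nat.mod_eq_of_lt h]
    exact concatSeq_closed_of_lt hTS h
  · rw [show r % M + 1 = M by omega, Nat.mod_self, show r % M = M - 1 by omega,
      dtgt_concatSeq_last hST hTS hM, dsrc_concatSeq_zero hTS hM]

end Concat

section Necklace

variable {V E : Type*} (s t : E → V) (nV : V → ℕ) (K : Type*) [CommRing K] (N : ℕ)
  (p q : RawLoop s t) {i j : ℕ}

theorem pathMat_concatSeq :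
    pathMat s t nV K N (concatSeq s t p q i j) 0 (p.len - 1 + (q.len - 1)) =
      pathMat s t nV K N q.f (j + 1) (q.len - 1) * pathMat s t nV K N p.f (i + 1) (p.len - 1) := by
  simp only [pathMat]
  rw [wordProd_add]
  congr 1
  · exact wordProd_congr fun r hr => by
      rw [concatSeq_of_le (by omega) (by omega), zero_add, Nat.add_sub_cancel_left]
  · exact wordProd_congr fun r hr => by rw [zero_add, concatSeq_of_lt hr]

theorem brMTermPoly_eq_trace_pathMat_mul (hST : dsrc s t (q.f j) = dtgt s t (p.f i))
    (hTS : dtgt s t (q.f j) = dsrc s t (p.f i)) (hM : p.len - 1 + (q.len - 1) ≠ 0)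
    (hNp : ∀ k, nV (dsrc s t (p.f k)) ≤ N) (hNq : ∀ k, nV (dsrc s t (q.f k)) ≤ N) :
    brMTermPoly K s t nV p q i j = trace (pathMat s t nV K N q.f (j + 1) (q.len - 1) *
      pathMat s t nV K N p.f (i + 1) (p.len - 1)) := by
  rw [brMTermPoly, dif_neg hM, dif_pos (concatSeq_closed hST hTS hM),
    trPoly_eq_trace s t nV K N _ ?_]
  · exact congrArg trace (pathMat_concatSeq s t nV K N p q)
  · intro r
    simp only [concatSeq]
    split_ifs
    exacts [hNp _, hNq _]

theorem trace_projMat_pathMat_eq_brMTermPoly (hST : dsrc s t (q.f j) = dtgt s t (p.f i))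
    (hTS : dtgt s t (q.f j) = dsrc s t (p.f i))
    (hNp : ∀ k, nV (dsrc s t (p.f k)) ≤ N) (hNq : ∀ k, nV (dsrc s t (q.f k)) ≤ N) :
    trace (projMat s t nV K N (dtgt s t (p.f i)) * pathMat s t nV K N q.f (j + 1) (q.len - 1) *
      projMat s t nV K N (dsrc s t (p.f i)) * pathMat s t nV K N p.f (i + 1) (p.len - 1)) =
      brMTermPoly K s t nV p q i j := by
  by_cases hM : p.len - 1 + (q.len - 1) = 0
  · have hp : p.len - 1 = 0 := by omega
    have hq : q.len - 1 = 0 := by omega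
    have hv : dsrc s t (p.f i) = dtgt s t (p.f i) := by
      rw [← p.dtgt_add_len_sub_one i, hp, add_zero]
    rw [brMTermPoly, dif_pos hM, hp, hq, pathMat, pathMat, wordProd_zero, wordProd_zero,
      Matrix.mul_one, Matrix.mul_one, hv,
      trace_projMat_mul_self s t nV K N _ (by rw [p.closed]; exact hNp _), map_natCast]
  rw [brMTermPoly_eq_trace_pathMat_mul s t nV K N p q hST hTS hM hNp hNq]
  -- one of the two paths is nonempty, and its matrix absorbs the projections
  obtain ⟨n, hn⟩ | ⟨n, hn⟩ : (∃ n, p.len - 1 = n + 1) ∨ (∃ n, q.len - 1 = n + 1) := by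
    rcases Nat.eq_zero_or_pos (p.len - 1) with h | h
    · exact Or.inr ⟨q.len - 1 - 1, by omega⟩
    · exact Or.inl ⟨p.len - 1 - 1, by omega⟩
  · have hR := projMat_mul_pathMat_mul_projMat s t nV K N p.f (i + 1) n
    rw [show i + 1 + n = i + (p.len - 1) by omega, p.dtgt_add_len_sub_one, ← p.closed,
      ← hn] at hR
    conv_rhs => rw [← hR]
    simp only [Matrix.mul_assoc]
    rw [trace_mul_comm]
    simp only [Matrix.mul_assoc]
  · have hS := projMat_mul_pathMat_mul_projMat s t nV K N q.f (j + 1) n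
    rw [show j + 1 + n = j + (q.len - 1) by omega, q.dtgt_add_len_sub_one, hST, ← q.closed, hTS,
      ← hn] at hS
    rw [hS]

end Necklace

theorem dpair_ne_zero {V E : Type*} [DecidableEq E] (s t : E → V) {d₁ d₂ : E ⊕ E}
    (h : dpair d₁ d₂ ≠ 0) :
    dsrc s t d₂ = dtgt s t d₁ ∧ dtgt s t d₂ = dsrc s t d₁ := by
  rcases d₁ with e | e <;> rcases d₂ with e' | e' <;> simp [dpair] at h <;> subst h <;>
    exact ⟨rfl, rfl⟩

section Bracket

variable {V E : Type*} [DecidableEq E] {s t : E → V} {nV : V → ℕ} {K : Type*} [CommRing K]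

structure IsRepPoisson (P : MvPolynomial (RCoord s t nV) K →ₗ[K]
    MvPolynomial (RCoord s t nV) K →ₗ[K] MvPolynomial (RCoord s t nV) K) : Prop where
  skew : ∀ f g, P f g = - P g f
  leibniz : ∀ f g h, P f (g * h) = g * P f h + P f g * h
  X_inl_X_inr : ∀ (a : E) (u : Fin (nV (t a))) (v : Fin (nV (s a)))
    (w : Fin (nV (s a))) (z : Fin (nV (t a))),
    P (X ⟨Sum.inl a, (u, v)⟩) (X ⟨Sum.inr a, (w, z)⟩) =
      C (if u = z ∧ v = w then (1 : K) else 0)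
  X_X_of_dpair_eq_zero : ∀ (d₁ d₂ : E ⊕ E), dpair d₁ d₂ = 0 →
    ∀ (uv : Fin (nV (dtgt s t d₁)) × Fin (nV (dsrc s t d₁)))
      (wz : Fin (nV (dtgt s t d₂)) × Fin (nV (dsrc s t d₂))),
    P (X ⟨d₁, uv⟩) (X ⟨d₂, wz⟩) = 0

variable {P : MvPolynomial (RCoord s t nV) K →ₗ[K] MvPolynomial (RCoord s t nV) K →ₗ[K]
    MvPolynomial (RCoord s t nV) K}

namespace IsRepPoisson

noncomputable def derivation (hP : IsRepPoisson P) (f : MvPolynomial (RCoord s t nV) K) :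
    Derivation K (MvPolynomial (RCoord s t nV) K) (MvPolynomial (RCoord s t nV) K) :=
  Derivation.mk' (P f) fun g h => by
    rw [hP.leibniz, smul_eq_mul, smul_eq_mul, mul_comm (P f g)]

@[simp]
theorem coe_derivation (hP : IsRepPoisson P) (f : MvPolynomial (RCoord s t nV) K) :
    ⇑(hP.derivation f) = P f := rfl

theorem X_X (hP : IsRepPoisson P) (d₁ d₂ : E ⊕ E) (a : Fin (nV (dtgt s t d₁)))
    (b : Fin (nV (dsrc s t d₁))) (a' : Fin (nV (dtgt s t d₂))) (b' : Fin (nV (dsrc s t d₂))) :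
    P (X ⟨d₁, (a, b)⟩) (X ⟨d₂, (a', b')⟩) =
      dpair d₁ d₂ • C (if (a : ℕ) = b' ∧ (b : ℕ) = a' then (1 : K) else 0) := by
  by_cases h0 : dpair d₁ d₂ = 0
  · rw [hP.X_X_of_dpair_eq_zero d₁ d₂ h0, h0, zero_smul]
  rcases d₁ with e | e <;> rcases d₂ with e' | e' <;> simp [dpair] at h0 <;> subst h0
  · refine (hP.X_inl_X_inr e a b a' b').trans ?_
    rw [dpair, if_pos rfl, one_smul]
    congr 2
    exact propext ⟨fun h => ⟨congrArg Fin.val h.1, congrArg Fin.val h.2⟩,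
      fun h => ⟨Fin.ext h.1, Fin.ext h.2⟩⟩
  · rw [hP.skew]
    refine (congrArg Neg.neg (hP.X_inl_X_inr e a' b' a b)).trans ?_
    rw [dpair, if_pos rfl, neg_one_smul]
    congr 3
    exact propext ⟨fun h => ⟨congrArg Fin.val h.2.symm, congrArg Fin.val h.1.symm⟩,
      fun h => ⟨Fin.ext h.2.symm, Fin.ext h.1.symm⟩⟩

variable {N : ℕ} {a : E ⊕ E} {c d : Fin N}

theorem arrowMat_arrowMat (hP : IsRepPoisson P) (hc : (c : ℕ) < nV (dtgt s t a))
    (hd : (d : ℕ) < nV (dsrc s t a)) (b : E ⊕ E) (c' d' : Fin N) :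
    P (arrowMat s t nV K N a c d) (arrowMat s t nV K N b c' d') =
      dpair a b • if c = d' ∧ d = c' then 1 else 0 := by
  simp only [arrowMat, of_apply, dif_pos (And.intro hc hd)]
  by_cases hb : (c' : ℕ) < nV (dtgt s t b) ∧ (d' : ℕ) < nV (dsrc s t b)
  · rw [dif_pos hb, hP.X_X, apply_ite C, map_one, map_zero]
    simp only [Fin.val_inj]
  · rw [dif_neg hb, map_zero]
    by_cases h0 : dpair a b = 0
    · rw [h0, zero_smul]
    obtain ⟨hts, hst⟩ := dpair_ne_zero s t h0
    rw [if_neg, smul_zero]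
    rintro ⟨rfl, rfl⟩
    exact hb ⟨hst ▸ hd, hts ▸ hc⟩

theorem trace_map_arrowMat_mul (hP : IsRepPoisson P) (hc : (c : ℕ) < nV (dtgt s t a))
    (hd : (d : ℕ) < nV (dsrc s t a)) (b : E ⊕ E)
    (S : Matrix (Fin N) (Fin N) (MvPolynomial (RCoord s t nV) K)) :
    trace ((arrowMat s t nV K N b).map (P (arrowMat s t nV K N a c d)) * S) =
      dpair a b • S c d := by
  simp only [trace, Matrix.diag, mul_apply, map_apply, hP.arrowMat_arrowMat hc hd,
    smul_mul_assoc, ite_mul, one_mul, zero_mul, ← Finset.smul_sum, ite_and, Finset.sum_ite_eq,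
    Finset.mem_univ, if_true]

theorem arrowMat_trace_pathMat (hP : IsRepPoisson P) (hc : (c : ℕ) < nV (dtgt s t a))
    (hd : (d : ℕ) < nV (dsrc s t a)) (q : RawLoop s t) :
    P (arrowMat s t nV K N a c d) (trace (pathMat s t nV K N q.f 0 q.len)) =
      ∑ l ∈ range q.len, dpair a (q.f l) • pathMat s t nV K N q.f (l + 1) (q.len - 1) c d :=
  calc P (arrowMat s t nV K N a c d) (trace (pathMat s t nV K N q.f 0 q.len))
      = hP.derivation (arrowMat s t nV K N a c d) (trace (pathMat s t nV K N q.f 0 q.len)) := rfl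
    _ = _ := derivation_trace_pathMat s t nV K N _ q
    _ = _ := Finset.sum_congr rfl fun _ _ => hP.trace_map_arrowMat_mul hc hd _ _

theorem map_arrowMat_trace_pathMat (hP : IsRepPoisson P) (a : E ⊕ E) (q : RawLoop s t) :
    (arrowMat s t nV K N a).map (P (trace (pathMat s t nV K N q.f 0 q.len))) =
      -∑ l ∈ range q.len, dpair a (q.f l) • (projMat s t nV K N (dtgt s t a) *
        pathMat s t nV K N q.f (l + 1) (q.len - 1) * projMat s t nV K N (dsrc s t a)) := by
  ext c d : 1
  simp only [map_apply, Matrix.neg_apply, Matrix.sum_apply, Matrix.smul_apply, projMat,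
    diagonal_mul, mul_diagonal]
  by_cases h : (c : ℕ) < nV (dtgt s t a) ∧ (d : ℕ) < nV (dsrc s t a)
  · rw [hP.skew, hP.arrowMat_trace_pathMat h.1 h.2]
    simp [h.1, h.2]
  · rw [show arrowMat s t nV K N a c d = 0 from dif_neg h, map_zero]
    simp only [mul_ite, ite_mul, mul_one, mul_zero, zero_mul]
    refine (neg_eq_zero.2 (Finset.sum_eq_zero fun l _ => ?_)).symm
    split_ifs with hd hc
    · exact absurd ⟨hc, hd⟩ h
    all_goals exact smul_zero _

theorem trace_pathMat_trace_pathMat (hP : IsRepPoisson P) (p q : RawLoop s t) :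
    P (trace (pathMat s t nV K N p.f 0 p.len)) (trace (pathMat s t nV K N q.f 0 q.len)) =
      ∑ k ∈ range p.len, ∑ l ∈ range q.len, dpair (p.f k) (q.f l) •
        trace (projMat s t nV K N (dtgt s t (p.f k)) * pathMat s t nV K N q.f (l + 1) (q.len - 1) *
          projMat s t nV K N (dsrc s t (p.f k)) * pathMat s t nV K N p.f (k + 1) (p.len - 1)) := by
  rw [hP.skew, ← hP.coe_derivation, derivation_trace_pathMat, ← Finset.sum_neg_distrib]
  refine Finset.sum_congr rfl fun k _ => ?_
  simp only [coe_derivation, map_arrowMat_trace_pathMat hP, neg_mul, trace_neg, neg_neg,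
    Finset.sum_mul, Matrix.smul_mul, trace_sum, trace_smul]

end IsRepPoisson

end Bracket

theorem stmt_15_general {V E : Type*} [DecidableEq E] (s t : E → V) (nV : V → ℕ)
    (K : Type*) [Field K]
    (P : MvPolynomial (RCoord s t nV) K →ₗ[K] MvPolynomial (RCoord s t nV) K →ₗ[K]
      MvPolynomial (RCoord s t nV) K)
    (hskew : ∀ f g, P f g = - P g f)
    (hder : ∀ f g h, P f (g * h) = g * P f h + P f g * h)
    (hval : ∀ (a : E) (u : Fin (nV (t a))) (v : Fin (nV (s a)))
        (w : Fin (nV (s a))) (z : Fin (nV (t a))),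
      P (MvPolynomial.X ⟨Sum.inl a, (u, v)⟩) (MvPolynomial.X ⟨Sum.inr a, (w, z)⟩) =
        MvPolynomial.C (if u = z ∧ v = w then (1 : K) else 0))
    (hzero : ∀ (d₁ d₂ : E ⊕ E), dpair d₁ d₂ = 0 →
      ∀ (uv : Fin (nV (dtgt s t d₁)) × Fin (nV (dsrc s t d₁)))
        (wz : Fin (nV (dtgt s t d₂)) × Fin (nV (dsrc s t d₂))),
      P (MvPolynomial.X ⟨d₁, uv⟩) (MvPolynomial.X ⟨d₂, wz⟩) = 0) :
    (∀ p q : RawLoop s t, p.len = q.len → (∃ m, ∀ r, q.f r = p.f (r + m)) →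
      trPoly K s t nV p = trPoly K s t nV q) ∧
    (∀ p q : RawLoop s t,
      P (trPoly K s t nV p) (trPoly K s t nV q) =
        ∑ i ∈ Finset.range p.len, ∑ j ∈ Finset.range q.len,
          dpair (p.f i) (q.f j) • brMTermPoly K s t nV p q i j) := by
  refine ⟨fun p q hL ⟨m, hm⟩ => trPoly_eq_of_rotate s t nV K p q hL hm, fun p q => ?_⟩
  obtain ⟨Np, hNp⟩ := RawLoop.exists_dim_bound s t nV p
  obtain ⟨Nq, hNq⟩ := RawLoop.exists_dim_bound s t nV q
  have hp : ∀ k, nV (dsrc s t (p.f k)) ≤ Np + Nq := fun k => (hNp k).trans (by omega)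
  have hq : ∀ k, nV (dsrc s t (q.f k)) ≤ Np + Nq := fun k => (hNq k).trans (by omega)
  have hP : IsRepPoisson P := ⟨hskew, hder, hval, hzero⟩
  rw [trPoly_eq_trace s t nV K _ p hp, trPoly_eq_trace s t nV K _ q hq,
    hP.trace_pathMat_trace_pathMat]
  refine Finset.sum_congr rfl fun i _ => Finset.sum_congr rfl fun j _ => ?_
  by_cases h : dpair (p.f i) (q.f j) = 0
  · rw [h, zero_smul, zero_smul]
  · obtain ⟨hST, hTS⟩ := dpair_ne_zero s t h
    rw [trace_projMat_pathMat_eq_brMTermPoly s t nV K _ p q hST hTS hp hq]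

/-- Representation-variety witness of the classical necklace bracket.  Paint each vertex
`i` of the double quiver with a vector space of dimension `nV i` over a field `K` of
characteristic zero, and let `P = {-,-}` be the constant-coefficient Poisson bracket on the
polynomial functions on the representation space, i.e. the antisymmetric biderivation with
`{x^a_{uv}, x^{ā}_{wz}} = δ_{uz} δ_{vw}` for original arrows `a` and all other brackets of
coordinates zero.  Then the trace function of a closed path depends only on its cyclic
equivalence class, and the (induced) trace map intertwines the necklace bracket `br⁻` with
`P`. -/
theorem stmt_15 {V E : Type*} [DecidableEq E] (s t : E → V) (nV : V → ℕ)
    (K : Type*) [Field K] [CharZero K]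
    (P : MvPolynomial (RCoord s t nV) K →ₗ[K] MvPolynomial (RCoord s t nV) K →ₗ[K]
      MvPolynomial (RCoord s t nV) K)
    (hskew : ∀ f g, P f g = - P g f)
    (hder : ∀ f g h, P f (g * h) = g * P f h + P f g * h)
    (hval : ∀ (a : E) (u : Fin (nV (t a))) (v : Fin (nV (s a)))
        (w : Fin (nV (s a))) (z : Fin (nV (t a))),
      P (MvPolynomial.X ⟨Sum.inl a, (u, v)⟩) (MvPolynomial.X ⟨Sum.inr a, (w, z)⟩) =
        MvPolynomial.C (if u = z ∧ v = w then (1 : K) else 0))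
    (hzero : ∀ (d₁ d₂ : E ⊕ E), dpair d₁ d₂ = 0 →
      ∀ (uv : Fin (nV (dtgt s t d₁)) × Fin (nV (dsrc s t d₁)))
        (wz : Fin (nV (dtgt s t d₂)) × Fin (nV (dsrc s t d₂))),
      P (MvPolynomial.X ⟨d₁, uv⟩) (MvPolynomial.X ⟨d₂, wz⟩) = 0) :
    (∀ p q : RawLoop s t, p.len = q.len → (∃ m, ∀ r, q.f r = p.f (r + m)) →
      trPoly K s t nV p = trPoly K s t nV q) ∧
    (∀ p q : RawLoop s t,
      P (trPoly K s t nV p) (trPoly K s t nV q) =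
        ∑ i ∈ Finset.range p.len, ∑ j ∈ Finset.range q.len,
          dpair (p.f i) (q.f j) • brMTermPoly K s t nV p q i j) :=
  stmt_15_general s t nV K P hskew hder hval hzero
end

section
/- Let A be a commutative R-algebra and Δ: A → A an R-linear map. Then Δ is a differential operator of order ≤ k if and only if for all a₁,...,a_{k+1} ∈ A, ∑_{I ⊆ {1,...,k+1}} (-1)^{|I|} (∏_{i∈I^c} a_i) Δ(∏_{i∈I} a_i) = 0 — and moreover, the 'multilinear' vanishing T^{k+1}(Δ) = 0 (as a map A^⊗(k+2) → A) is equivalent to the apparently weaker condition T^{k+1}(Δ)∘(id^{⊗(k+1)} ⊗ u) = 0 obtained by setting the last input equal to 1. -/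
open Finset

/-- The iterated operator `T^N(F)`, where
`T(f)(a₀, a₁, …, a_m) = f(a₀ * a₁, a₂, …, a_m) − a₀ * f(a₁, …, a_m)`;
`TIter F N` is the multilinear-style map `A^(N+1) → A` obtained by applying `T` to `F`
`N` times. -/
def TIter {A : Type*} [CommRing A] (F : A → A) : (N : ℕ) → (Fin (N + 1) → A) → A
  | 0, v => F (v 0)
  | N + 1, v =>
      TIter F N (fun i => if i = 0 then v 0 * v 1 else v i.succ) -
        v 0 * TIter F N (fun i => v i.succ)

lemma TIter_eq {A : Type*} [CommRing A] (F : A → A) (N : ℕ) (v : Fin (N + 2) → A) :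
    TIter F (N + 1) v = F (∏ i, v i) - v 0 * F (∏ i : Fin (N + 1), v i.succ) := by
  induction N with
  | zero =>
      simp [TIter, Fin.prod_univ_succ]
  | succ N ih =>
      rw [show TIter F (N + 2) v =
        TIter F (N+1) (fun i => if i = 0 then v 0 * v 1 else v i.succ) -
          v 0 * TIter F (N+1) (fun i => v i.succ) from rfl, ih, ih]
      have h1 : (∏ i : Fin (N+2), if i = 0 then v 0 * v 1 else v i.succ)
          = ∏ i : Fin (N+3), v i := by
        rw [Fin.prod_univ_succ, Fin.prod_univ_succ (f := v), Fin.prod_univ_succ (f := fun i => v i.succ)]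
        simp [mul_assoc, Fin.succ_ne_zero]
      have h2 : (∏ i : Fin (N+1), if i.succ = 0 then v 0 * v 1 else v i.succ.succ)
          = ∏ i : Fin (N+1), v i.succ.succ := by
        apply Finset.prod_congr rfl
        intro i _
        simp [Fin.succ_ne_zero]
      have h3 : (∏ i : Fin (N+2), v i.succ) = v 1 * ∏ i : Fin (N+1), v i.succ.succ := by
        rw [Fin.prod_univ_succ]
        rfl
      rw [h1, h2, h3]
      simp only [if_pos rfl, if_true, Fin.succ_zero_eq_one]
      ring

lemma sum_powerset_map' {α β M : Type*} [AddCommMonoid M] [DecidableEq α] [DecidableEq β]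
    (e : α ↪ β) (s : Finset α) (f : Finset β → M) :
    ∑ t ∈ (s.map e).powerset, f t = ∑ t ∈ s.powerset, f (t.map e) := by
  refine (Finset.sum_bij (fun t _ => t.map e) ?_ ?_ ?_ ?_).symm
  · intro t ht
    rw [Finset.mem_powerset] at *
    exact Finset.map_subset_map.2 ht
  · intro t1 _ t2 _ hieq
    exact Finset.map_injective e hieq
  · intro t' ht'
    rw [Finset.mem_powerset] at ht'
    refine ⟨t'.preimage e (e.injective.injOn), Finset.mem_powerset.2 ?_, ?_⟩
    · intro x hx
      rw [Finset.mem_preimage] at hx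
      have := ht' hx
      rw [Finset.mem_map] at this
      obtain ⟨y, hy, hxy⟩ := this
      rwa [← e.injective hxy]
    · ext b
      simp only [Finset.mem_map, Finset.mem_preimage]
      constructor
      · rintro ⟨a, ha, rfl⟩; exact ha
      · intro hb
        obtain ⟨y, _, rfl⟩ := Finset.mem_map.1 (ht' hb)
        exact ⟨y, hb, rfl⟩
  · intro t _; rfl

lemma key_sum {R A : Type*} [CommRing R] [CommRing A] [Algebra R A]
    (k : ℕ) (D : A →ₗ[R] A) (a : Fin (k + 1) → A) (b : A) :
    ∑ J ∈ (Finset.univ : Finset (Finset (Fin (k + 2)))),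
        (-1 : ℤ) ^ J.card • ((∏ i ∈ Jᶜ, (Fin.snoc a b : Fin (k + 2) → A) i) *
          D (∏ i ∈ J, (Fin.snoc a b : Fin (k + 2) → A) i))
    = - ∑ I ∈ (Finset.univ : Finset (Finset (Fin (k + 1)))),
        (-1 : ℤ) ^ I.card • ((∏ i ∈ Iᶜ, a i) *
          (D ∘ₗ LinearMap.mulLeft R b - LinearMap.mulLeft R b ∘ₗ D) (∏ i ∈ I, a i)) := by
  have hlast : ∀ J : Finset (Fin (k + 1)), Fin.last (k + 1) ∉ J.map Fin.castSuccEmb := by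
    intro J hJ
    rw [Finset.mem_map] at hJ
    obtain ⟨x, _, hx⟩ := hJ
    exact (Fin.castSucc_lt_last x).ne hx
  have hprod : ∀ J : Finset (Fin (k + 1)),
      (∏ i ∈ J.map Fin.castSuccEmb, (Fin.snoc a b : Fin (k + 2) → A) i) = ∏ i ∈ J, a i := by
    intro J
    rw [Finset.prod_map]
    exact Finset.prod_congr rfl fun i _ => Fin.snoc_castSucc ..
  have hc1 : ∀ I : Finset (Fin (k + 1)),
      (I.map Fin.castSuccEmb)ᶜ = insert (Fin.last (k + 1)) (Iᶜ.map Fin.castSuccEmb) := by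
    intro I
    ext j
    refine Fin.lastCases ?_ (fun i => ?_) j
    · simp [hlast I, hlast Iᶜ]
    · rw [Finset.mem_compl, show (Fin.castSucc i) = Fin.castSuccEmb i from rfl,
        Finset.mem_insert, Finset.mem_map', Finset.mem_map', Finset.mem_compl]
      have hne : ¬ ((Fin.castSuccEmb i : Fin (k + 2)) = Fin.last (k + 1)) :=
        (Fin.castSucc_lt_last i).ne
      tauto
  have hc2 : ∀ I : Finset (Fin (k + 1)),
      (insert (Fin.last (k + 1)) (I.map Fin.castSuccEmb))ᶜ = Iᶜ.map Fin.castSuccEmb := by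
    intro I
    rw [Finset.compl_insert, hc1, Finset.erase_insert (hlast Iᶜ)]
  rw [← Finset.powerset_univ, Fin.univ_castSuccEmb, Finset.cons_eq_insert,
    Finset.sum_powerset_insert (hlast univ), sum_powerset_map', sum_powerset_map',
    Finset.powerset_univ, ← Finset.sum_add_distrib, ← Finset.sum_neg_distrib]
  refine Finset.sum_congr rfl fun I _ => ?_
  rw [hprod I, Finset.prod_insert (hlast I), Fin.snoc_last, hprod I,
    hc1 I, hc2 I, Finset.prod_insert (hlast Iᶜ), Fin.snoc_last, hprod Iᶜ,
    Finset.card_insert_of_notMem (hlast I), Finset.card_map]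
  simp only [LinearMap.sub_apply, LinearMap.comp_apply, LinearMap.mulLeft_apply,
    zsmul_eq_mul]
  push_cast
  ring

lemma part1 {R A : Type*} [CommRing R] [CommRing A] [Algebra R A] :
    ∀ (k : ℕ) (D : A →ₗ[R] A),
    IsDiffOp k D ↔
      ∀ a : Fin (k + 1) → A,
        ∑ I ∈ (Finset.univ : Finset (Finset (Fin (k + 1)))),
          (-1 : ℤ) ^ I.card • ((∏ i ∈ Iᶜ, a i) * D (∏ i ∈ I, a i)) = 0 := by
  intro k
  induction k with
  | zero =>
    intro D
    have huniv : (Finset.univ : Finset (Finset (Fin 1))) = {∅, {0}} := by decide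
    have c1 : ((∅ : Finset (Fin 1))ᶜ) = {0} := by decide
    have c2 : (({0} : Finset (Fin 1))ᶜ) = ∅ := by decide
    have hmem : (∅ : Finset (Fin 1)) ∉ ({({0} : Finset (Fin 1))} : Finset (Finset (Fin 1))) := by
      decide
    constructor
    · intro h a
      have hd : D (a 0) = D 1 * a 0 := by rw [← h 1 (a 0), one_mul]
      rw [huniv, Finset.sum_insert hmem, Finset.sum_singleton, c1, c2]
      simp [hd]
      ring
    · intro h x y
      have key : ∀ z : A, D z = z * D 1 := by
        intro z
        have hz := h (fun _ => z)
        rw [huniv, Finset.sum_insert hmem, Finset.sum_singleton, c1, c2] at hz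
        simp at hz
        linear_combination -hz
      rw [key (x * y), key x]
      ring
  | succ k ih =>
    intro D
    constructor
    · intro h c
      have h' : ∀ b : A, IsDiffOp k (D ∘ₗ LinearMap.mulLeft R b - LinearMap.mulLeft R b ∘ₗ D) := h
      have hc := (Fin.snoc_init_self c).symm
      rw [show c = Fin.snoc (Fin.init c) (c (Fin.last (k + 1))) from hc, key_sum, neg_eq_zero]
      exact (ih _).1 (h' _) _
    · intro h
      show ∀ b : A, IsDiffOp k (D ∘ₗ LinearMap.mulLeft R b - LinearMap.mulLeft R b ∘ₗ D)
      intro b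
      rw [ih]
      intro a
      have hs := h (Fin.snoc a b)
      rw [key_sum] at hs
      exact neg_eq_zero.mp hs

lemma part2 {R A : Type*} [CommRing R] [CommRing A] [Algebra R A] (k : ℕ) (D : A →ₗ[R] A) :
    (∀ v : Fin (k + 2) → A, TIter (⇑D) (k + 1) v = 0) ↔
      (∀ v : Fin (k + 1) → A, TIter (⇑D) (k + 1) (Fin.snoc v 1) = 0) := by
  constructor
  · exact fun h v => h _
  · intro h
    have H' : ∀ v : Fin (k + 1) → A, D (∏ i, v i) = v 0 * D (∏ i : Fin k, v i.succ) := by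
      intro v
      have hv := h v
      rw [TIter_eq] at hv
      have p1 : (∏ i : Fin (k + 2), (Fin.snoc v 1 : Fin (k + 2) → A) i) = ∏ i, v i := by
        rw [Fin.prod_snoc, mul_one]
      have p0 : (Fin.snoc v (1 : A) : Fin (k + 2) → A) 0 = v 0 := by
        simp [Fin.snoc, Fin.castPred_zero]
      have p2 : (fun i : Fin (k + 1) => (Fin.snoc v 1 : Fin (k + 2) → A) i.succ)
          = Fin.snoc (fun i : Fin k => v i.succ) 1 := by
        funext i
        refine Fin.lastCases ?_ (fun j => ?_) i
        · rw [Fin.succ_last, Fin.snoc_last, Fin.snoc_last]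
        · rw [Fin.succ_castSucc, Fin.snoc_castSucc, Fin.snoc_castSucc]
      rw [p1, p0, p2, Fin.prod_snoc, mul_one, sub_eq_zero] at hv
      exact hv
    intro w
    rw [TIter_eq, sub_eq_zero]
    have e1 := H' (fun i => w i.succ)
    simp only [Fin.succ_zero_eq_one] at e1
    have e2 := H' (Fin.cons (w 0 * w 1) (fun i : Fin k => w i.succ.succ))
    simp only [Fin.cons_zero, Fin.cons_succ] at e2
    have pc : (∏ i : Fin (k + 1), Fin.cons (w 0 * w 1) (fun i : Fin k => w i.succ.succ) i)
        = ∏ i : Fin (k + 2), w i := by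
      rw [Fin.prod_univ_succ, Fin.prod_univ_succ (f := w),
        Fin.prod_univ_succ (f := fun i : Fin (k + 1) => w i.succ)]
      simp [Fin.cons_zero, Fin.cons_succ, mul_assoc]
    rw [pc] at e2
    rw [e2, e1]
    ring

theorem stmt_19 {R A : Type*} [CommRing R] [CommRing A] [Algebra R A]
    (k : ℕ) (D : A →ₗ[R] A) :
    (IsDiffOp k D ↔
      ∀ a : Fin (k + 1) → A,
        ∑ I ∈ (Finset.univ : Finset (Finset (Fin (k + 1)))),
          (-1 : ℤ) ^ I.card • ((∏ i ∈ Iᶜ, a i) * D (∏ i ∈ I, a i)) = 0) ∧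
    ((∀ v : Fin (k + 2) → A, TIter (⇑D) (k + 1) v = 0) ↔
      (∀ v : Fin (k + 1) → A, TIter (⇑D) (k + 1) (Fin.snoc v 1) = 0)) := by
  exact ⟨part1 k D, part2 k D⟩
end
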